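/- arXiv:1307.4667 — 5 statements merged into one kernel-verified Lean document; each statement's English description precedes it below -/
import Mathlib

section
/- Let g : ℝ^d → ℝ be Lipschitz with constant L, let V : ℝ^d → ℝ be continuous with V(x) ≤ α|x|^p + β for constants α, β, and let p ∈ (1,∞). Then there exists T > 0 depending only on α and p such that for all x ∈ ℝ^d and t ∈ (0,T), the classical value function u(x,t) = inf{ g(γ(0)) + ∫_0^t ((1/p)|γ'(s)|^p − V(γ(s))) ds : γ ∈ AC_p([0,t];ℝ^d), γ(t) = x } satisfies u(x,t) > −∞. -/
set_option maxHeartbeats 1000000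


noncomputable section
open MeasureTheory Set Filter

/-- `γ` is an absolutely continuous path on `[a,b]` with derivative `γ'` in `L^p`. -/
def IsPath {d : ℕ} (γ γ' : ℝ → EuclideanSpace ℝ (Fin d)) (a b p : ℝ) : Prop :=
  IntervalIntegrable γ' volume a b ∧
  (∀ s₁ s₂ : ℝ, a ≤ s₁ → s₁ ≤ s₂ → s₂ ≤ b → γ s₂ - γ s₁ = ∫ r in s₁..s₂, γ' r) ∧
  IntegrableOn (fun s => ‖γ' s‖ ^ p) (Icc a b)

/-- The set of action values of admissible paths for the classical value function
`u(x,t)`. -/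
def uSet {d : ℕ} (g V : EuclideanSpace ℝ (Fin d) → ℝ) (p t : ℝ)
    (x : EuclideanSpace ℝ (Fin d)) : Set ℝ :=
  {r | ∃ γ γ' : ℝ → EuclideanSpace ℝ (Fin d), IsPath γ γ' 0 t p ∧ γ t = x ∧
        r = g (γ 0) + ∫ s in (0:ℝ)..t, ((1 / p) * ‖γ' s‖ ^ p - V (γ s))}

/-- `(a+b)^p ≤ 2^p (a^p + b^p)` for nonnegative reals. -/
lemma two_pow_bound {a b p : ℝ} (ha : 0 ≤ a) (hb : 0 ≤ b) (hp : 0 ≤ p) :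
    (a + b) ^ p ≤ 2 ^ p * (a ^ p + b ^ p) := by
  have hm : a + b ≤ 2 * max a b := by
    rcases le_total a b with h | h
    · rw [max_eq_right h]; linarith
    · rw [max_eq_left h]; linarith
  calc (a + b) ^ p ≤ (2 * max a b) ^ p :=
        Real.rpow_le_rpow (by linarith) hm hp
    _ = 2 ^ p * (max a b) ^ p :=
        Real.mul_rpow (by norm_num) (le_max_of_le_left ha)
    _ ≤ 2 ^ p * (a ^ p + b ^ p) := by
        have hmax : (max a b) ^ p ≤ a ^ p + b ^ p := by
          rcases max_cases a b with ⟨h, _⟩ | ⟨h, _⟩ <;> rw [h]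
          · exact le_add_of_nonneg_right (Real.rpow_nonneg hb p)
          · exact le_add_of_nonneg_left (Real.rpow_nonneg ha p)
        exact mul_le_mul_of_nonneg_left hmax (by positivity)

/-- Hölder inequality on `(0,t]`, derived from pointwise Young's inequality. -/
lemma holder_aux {f : ℝ → ℝ} {t p q : ℝ} (ht : 0 < t) (hpq : Real.HolderConjugate p q)
    (hf0 : ∀ s, 0 ≤ f s)
    (hf : IntegrableOn f (Ioc 0 t))
    (hfp : IntegrableOn (fun s => f s ^ p) (Ioc 0 t)) :
    ∫ s in Ioc 0 t, f s ≤ t ^ (1/q) * (∫ s in Ioc 0 t, f s ^ p) ^ (1/p) := by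
  have hp0 : 0 < p := hpq.pos
  have hq0 : 0 < q := hpq.symm.pos
  set E := ∫ s in Ioc 0 t, f s ^ p with hE
  have hE0 : 0 ≤ E := integral_nonneg fun s => Real.rpow_nonneg (hf0 s) p
  have hsum : 1 / p + 1 / q = 1 := by
    simpa [one_div] using hpq.inv_add_inv_eq_one
  have key : ∀ ε : ℝ, 0 < ε →
      ∫ s in Ioc 0 t, f s ≤ ε ^ p * E / p + ε⁻¹ ^ q * t / q := by
    intro ε hε
    have hconst : IntegrableOn (fun _ : ℝ => ε⁻¹ ^ q / q) (Ioc 0 t) :=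
      integrableOn_const (measure_Ioc_lt_top).ne
    have hrhs : IntegrableOn (fun s => ε ^ p / p * f s ^ p + ε⁻¹ ^ q / q) (Ioc 0 t) :=
      (hfp.const_mul _).add hconst
    have hmono : ∫ s in Ioc 0 t, f s
        ≤ ∫ s in Ioc 0 t, (ε ^ p / p * f s ^ p + ε⁻¹ ^ q / q) := by
      refine integral_mono hf hrhs fun s => ?_
      have hy := Real.young_inequality_of_nonneg
        (mul_nonneg hε.le (hf0 s)) (inv_nonneg.2 hε.le) hpq
      have h1 : (ε * f s) * ε⁻¹ = f s := by field_simp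
      have h2 : (ε * f s) ^ p = ε ^ p * f s ^ p := Real.mul_rpow hε.le (hf0 s)
      rw [h1, h2] at hy
      calc f s ≤ ε ^ p * f s ^ p / p + ε⁻¹ ^ q / q := hy
        _ = ε ^ p / p * f s ^ p + ε⁻¹ ^ q / q := by ring
    have heq : ∫ s in Ioc 0 t, (ε ^ p / p * f s ^ p + ε⁻¹ ^ q / q)
        = ε ^ p * E / p + ε⁻¹ ^ q * t / q := by
      rw [integral_add (hfp.const_mul _) hconst, integral_const_mul, setIntegral_const]
      rw [Real.volume_real_Ioc_of_le ht.le, sub_zero]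
      rw [smul_eq_mul]
      ring
    linarith [hmono, le_of_eq heq]
  by_cases hE' : E = 0
  · have hz : (fun s => f s ^ p) =ᵐ[volume.restrict (Ioc 0 t)] 0 :=
      (integral_eq_zero_iff_of_nonneg (fun s => Real.rpow_nonneg (hf0 s) p) hfp).mp hE'
    have hfz : f =ᵐ[volume.restrict (Ioc 0 t)] 0 := by
      filter_upwards [hz] with s hs
      have : f s ^ p = 0 := hs
      exact (Real.rpow_eq_zero (hf0 s) hp0.ne').mp this
    rw [integral_congr_ae hfz]
    simp [hE'.symm ▸ (rfl : E = E), hE', Real.zero_rpow (by positivity : (1:ℝ)/p ≠ 0)]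
    positivity
  · have hEpos : 0 < E := lt_of_le_of_ne hE0 (Ne.symm hE')
    have htE : 0 < t / E := div_pos ht hEpos
    set ε := (t / E) ^ (1 / (p * q)) with hεdef
    have hεpos : 0 < ε := Real.rpow_pos_of_pos htE _
    have h1 : ε ^ p * E = t ^ (1/q) * E ^ (1/p) := by
      have e0 : ε ^ p = (t / E) ^ (1/q) := by
        rw [hεdef, ← Real.rpow_mul htE.le]
        congr 1
        field_simp
      have e1 : E ^ (1/p) = E / E ^ (1/q) := by
        rw [show (1:ℝ)/p = 1 - 1/q by linarith, Real.rpow_sub hEpos, Real.rpow_one]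
      rw [e0, Real.div_rpow ht.le hEpos.le, e1]
      ring
    have h2 : ε⁻¹ ^ q * t = t ^ (1/q) * E ^ (1/p) := by
      have e0 : ε⁻¹ ^ q = (E / t) ^ (1/p) := by
        rw [hεdef, ← Real.inv_rpow htE.le, inv_div, ← Real.rpow_mul (by positivity)]
        congr 1
        field_simp
      have e1 : t ^ (1/q) = t / t ^ (1/p) := by
        rw [show (1:ℝ)/q = 1 - 1/p by linarith, Real.rpow_sub ht, Real.rpow_one]
      rw [e0, Real.div_rpow hEpos.le ht.le, e1]
      ring
    have hfin : ε ^ p * E / p + ε⁻¹ ^ q * t / q = t ^ (1/q) * E ^ (1/p) := by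
      rw [h1, h2]
      calc t ^ (1/q) * E ^ (1/p) / p + t ^ (1/q) * E ^ (1/p) / q
          = t ^ (1/q) * E ^ (1/p) * (1/p + 1/q) := by ring
        _ = t ^ (1/q) * E ^ (1/p) := by rw [hsum, mul_one]
    exact (key ε hεpos).trans (le_of_eq hfin)

/-- Finiteness of the classical value function (analogue of Corollary 2.2): if `g` is
`L`-Lipschitz and `V` is continuous with `V(x) ≤ α|x|^p + β`, then there is `T > 0`
(depending only on `α` and `p`) so that for `0 < t < T` the infimum defining `u(x,t)`
is bounded below, i.e. `u(x,t) > -∞`. -/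
theorem classical_value_finite {d : ℕ} (p : ℝ) (hp : 1 < p)
    (g V : EuclideanSpace ℝ (Fin d) → ℝ) (L α β : ℝ)
    (hg : LipschitzWith (Real.toNNReal L) g) (hV : Continuous V)
    (hVb : ∀ x, V x ≤ α * ‖x‖ ^ p + β) :
    ∃ T : ℝ, 0 < T ∧ ∀ (x : EuclideanSpace ℝ (Fin d)) (t : ℝ), 0 < t → t < T →
      BddBelow (uSet g V p t x) := by
  have hp0 : 0 < p := lt_trans zero_lt_one hp
  set q := Real.conjExponent p with hqdef
  have hpq : Real.HolderConjugate p q := Real.HolderConjugate.conjExponent hp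
  have hq0 : 0 < q := hpq.symm.pos
  set A := max α 0 with hA
  have hA0 : 0 ≤ A := le_max_right _ _
  set B := max L 0 with hB
  have hB0 : 0 ≤ B := le_max_right _ _
  set K := A * 2 ^ p with hK
  have hK0 : 0 ≤ K := mul_nonneg hA0 (by positivity)
  refine ⟨min 1 (1 / (2 * p * (K + 1))), lt_min one_pos (by positivity), ?_⟩
  intro x t ht htT
  have ht1 : t < 1 := lt_of_lt_of_le htT (min_le_left _ _)
  have htK : t < 1 / (2 * p * (K + 1)) := lt_of_lt_of_le htT (min_le_right _ _)
  -- key smallness: K * t^p ≤ 1/(2p)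
  have htp : t ^ p ≤ t := by
    have := Real.rpow_le_rpow_of_exponent_ge ht ht1.le hp.le
    rwa [Real.rpow_one] at this
  have hKt : K * t ^ p ≤ 1 / (2 * p) := by
    have h1 : K * t ^ p ≤ K * t := mul_le_mul_of_nonneg_left htp hK0
    have h2 : K * t ≤ K * (1 / (2 * p * (K + 1))) :=
      mul_le_mul_of_nonneg_left htK.le hK0
    have h3 : K * (1 / (2 * p * (K + 1))) ≤ 1 / (2 * p) := by
      rw [show (1:ℝ) / (2 * p * (K + 1)) = 1 / (2 * p) * (1 / (K + 1)) by
        field_simp]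
      rw [← mul_assoc, mul_comm K, mul_assoc]
      have : K * (1 / (K + 1)) ≤ 1 := by
        rw [mul_one_div, div_le_one (by linarith)]; linarith
      nlinarith [one_div_pos.2 (mul_pos two_pos hp0)]
    linarith
  set M := (B * t ^ (1/q) / (1/2 : ℝ) ^ (1/p)) ^ q / q with hM
  refine ⟨g x - K * t * ‖x‖ ^ p - β * t - M, ?_⟩
  rintro r ⟨γ, γ', ⟨hint, hrep, hLp⟩, hγt, hr⟩
  -- basic integrability on (0,t]
  have hint' : IntegrableOn γ' (Ioc 0 t) :=
    (intervalIntegrable_iff_integrableOn_Ioc_of_le ht.le).mp hint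
  have hnorm : IntegrableOn (fun s => ‖γ' s‖) (Ioc 0 t) := hint'.norm
  have hLp' : IntegrableOn (fun s => ‖γ' s‖ ^ p) (Ioc 0 t) :=
    hLp.mono_set Ioc_subset_Icc_self
  set E := ∫ s in Ioc 0 t, ‖γ' s‖ ^ p with hE
  have hE0 : 0 ≤ E := integral_nonneg fun s => Real.rpow_nonneg (norm_nonneg _) p
  set I := ∫ s in Ioc 0 t, ‖γ' s‖ with hI
  have hIbound : I ≤ t ^ (1/q) * E ^ (1/p) :=
    holder_aux ht hpq (fun s => norm_nonneg _) hnorm hLp'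
  have hI0 : 0 ≤ I := integral_nonneg fun s => norm_nonneg _
  -- distance bound along the path
  have hdist : ∀ s ∈ Icc (0:ℝ) t, ‖γ s - x‖ ≤ I := by
    intro s hs
    have hrep' := hrep s t hs.1 hs.2 le_rfl
    have h1 : ‖γ s - x‖ = ‖∫ r in s..t, γ' r‖ := by
      rw [← hγt, norm_sub_rev, hrep']
    rw [h1]
    calc ‖∫ r in s..t, γ' r‖ ≤ ∫ r in Set.uIoc s t, ‖γ' r‖ :=
          intervalIntegral.norm_integral_le_integral_norm_uIoc
      _ = ∫ r in Ioc s t, ‖γ' r‖ := by rw [uIoc_of_le hs.2]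
      _ ≤ I := by
          refine setIntegral_mono_set hnorm ?_ ?_
          · exact Eventually.of_forall fun s => norm_nonneg _
          · exact HasSubset.Subset.eventuallyLE (Ioc_subset_Ioc_left hs.1)
  -- continuity of the path
  have hcont : ContinuousOn γ (Icc 0 t) := by
    have hprim := intervalIntegral.continuousOn_primitive_interval'
      (a := 0) hint left_mem_uIcc
    have huIcc : uIcc (0:ℝ) t = Icc 0 t := uIcc_of_le ht.le
    rw [huIcc] at hprim
    refine ContinuousOn.congr (f := fun s => γ 0 + ∫ r in (0:ℝ)..s, γ' r)
      (continuousOn_const.add hprim) ?_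
    intro s hs
    have h := hrep 0 s le_rfl hs.1 hs.2
    show γ s = γ 0 + ∫ r in (0:ℝ)..s, γ' r
    rw [← h]
    abel
  have hVγ : IntegrableOn (fun s => V (γ s)) (Ioc 0 t) :=
    ((hV.comp_continuousOn hcont).integrableOn_compact isCompact_Icc).mono_set
      Ioc_subset_Icc_self
  -- split the action integral
  have hsplit : ∫ s in (0:ℝ)..t, ((1 / p) * ‖γ' s‖ ^ p - V (γ s))
      = (1/p) * E - ∫ s in Ioc 0 t, V (γ s) := by
    rw [intervalIntegral.integral_of_le ht.le,
      integral_sub (hLp'.const_mul _) hVγ, integral_const_mul]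
  -- bound the potential term
  set P := ‖x‖ + t ^ (1/q) * E ^ (1/p) with hP
  have hP0 : 0 ≤ P := add_nonneg (norm_nonneg _) (by positivity)
  have hVpt : ∀ s ∈ Ioc (0:ℝ) t, V (γ s) ≤ A * P ^ p + β := by
    intro s hs
    have hsIcc : s ∈ Icc (0:ℝ) t := Ioc_subset_Icc_self hs
    have hns : ‖γ s‖ ≤ P := by
      have h1 : ‖γ s‖ ≤ ‖x‖ + ‖γ s - x‖ := by
        have := norm_add_le x (γ s - x)
        have h2 : x + (γ s - x) = γ s := by abel
        rwa [h2] at this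
      have h2 : ‖γ s - x‖ ≤ I := hdist s hsIcc
      calc ‖γ s‖ ≤ ‖x‖ + I := by linarith
        _ ≤ P := by rw [hP]; linarith [hIbound]
    have hpow : ‖γ s‖ ^ p ≤ P ^ p :=
      Real.rpow_le_rpow (norm_nonneg _) hns hp0.le
    calc V (γ s) ≤ α * ‖γ s‖ ^ p + β := hVb _
      _ ≤ A * ‖γ s‖ ^ p + β := by
          have := Real.rpow_nonneg (norm_nonneg (γ s)) p
          nlinarith [le_max_left α (0:ℝ)]
      _ ≤ A * P ^ p + β := by nlinarith
  have hVint : ∫ s in Ioc 0 t, V (γ s) ≤ t * (A * P ^ p + β) := by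
    have hconst : IntegrableOn (fun _ : ℝ => A * P ^ p + β) (Ioc 0 t) :=
      integrableOn_const (measure_Ioc_lt_top).ne
    have := setIntegral_mono_on hVγ hconst measurableSet_Ioc hVpt
    rwa [setIntegral_const, Real.volume_real_Ioc_of_le ht.le, sub_zero,
      smul_eq_mul] at this
  -- expand P^p
  have hTE : (t ^ (1/q) * E ^ (1/p)) ^ p = t ^ (p - 1) * E := by
    rw [Real.mul_rpow (by positivity) (by positivity)]
    congr 1
    · rw [← Real.rpow_mul ht.le, show (1/q) * p = p / q by ring,
        hpq.div_conj_eq_sub_one]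
    · rw [← Real.rpow_mul hE0, show (1/p) * p = 1 by field_simp, Real.rpow_one]
  have hPp : P ^ p ≤ 2 ^ p * (‖x‖ ^ p + t ^ (p - 1) * E) := by
    calc P ^ p ≤ 2 ^ p * (‖x‖ ^ p + (t ^ (1/q) * E ^ (1/p)) ^ p) :=
          two_pow_bound (norm_nonneg _) (by positivity) hp0.le
      _ = 2 ^ p * (‖x‖ ^ p + t ^ (p - 1) * E) := by rw [hTE]
  -- potential integral final bound
  have hVfinal : ∫ s in Ioc 0 t, V (γ s)
      ≤ K * t * ‖x‖ ^ p + K * t ^ p * E + β * t := by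
    have h1 : t * (A * P ^ p + β)
        ≤ t * (A * (2 ^ p * (‖x‖ ^ p + t ^ (p - 1) * E)) + β) := by
      have h0 := mul_le_mul_of_nonneg_left hPp hA0
      exact mul_le_mul_of_nonneg_left (by linarith) ht.le
    have h2 : t * (A * (2 ^ p * (‖x‖ ^ p + t ^ (p - 1) * E)) + β)
        = K * t * ‖x‖ ^ p + K * (t * t ^ (p - 1)) * E + β * t := by
      rw [hK]; ring
    have h3 : t * t ^ (p - 1) = t ^ p := by
      conv_rhs => rw [show p = 1 + (p - 1) by ring]
      rw [Real.rpow_add ht, Real.rpow_one]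
    rw [h3] at h2
    linarith [hVint]
  -- Lipschitz bound on the endpoint cost
  have hgb : g x - B * I ≤ g (γ 0) := by
    have hd := hg.dist_le_mul (γ 0) x
    rw [Real.coe_toNNReal', ← hB, Real.dist_eq, dist_eq_norm] at hd
    have h0I : ‖γ 0 - x‖ ≤ I := hdist 0 ⟨le_rfl, ht.le⟩
    have habs : |g (γ 0) - g x| ≤ B * I :=
      le_trans hd (mul_le_mul_of_nonneg_left h0I hB0)
    have := (abs_le.mp habs).1
    linarith
  -- Young's inequality step: B * t^(1/q) * E^(1/p) ≤ (1/(2p)) * E + M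
  have hyoung : B * (t ^ (1/q) * E ^ (1/p)) ≤ 1 / (2 * p) * E + M := by
    set z := E ^ (1/p) with hz
    have hz0 : 0 ≤ z := by positivity
    have hzp : z ^ p = E := by
      rw [hz, ← Real.rpow_mul hE0, show (1/p) * p = 1 by field_simp, Real.rpow_one]
    set a := (1/2 : ℝ) ^ (1/p) * z with ha
    set b := B * t ^ (1/q) / (1/2 : ℝ) ^ (1/p) with hb
    have ha0 : 0 ≤ a := by positivity
    have hb0 : 0 ≤ b := by positivity
    have hhalf : (0:ℝ) < (1/2 : ℝ) ^ (1/p) := by positivity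
    have hab : a * b = B * (t ^ (1/q) * z) := by
      rw [ha, hb]
      field_simp
    have hap : a ^ p = (1/2) * E := by
      rw [ha, Real.mul_rpow (by positivity) hz0, ← Real.rpow_mul (by norm_num),
        show (1/p) * p = 1 by field_simp, Real.rpow_one, hzp]
    have hy := Real.young_inequality_of_nonneg ha0 hb0 hpq
    rw [hab, hap] at hy
    have : (1/2 : ℝ) * E / p = 1 / (2 * p) * E := by ring
    rw [this] at hy
    rw [hM]
    linarith
  have hBI : B * I ≤ 1 / (2 * p) * E + M := by
    have := mul_le_mul_of_nonneg_left hIbound hB0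
    linarith
  -- coefficient bound
  have hcoef : K * t ^ p * E ≤ 1 / (2 * p) * E :=
    mul_le_mul_of_nonneg_right hKt hE0
  -- assemble
  rw [hr, hsplit]
  have hEsum : 1 / (2 * p) * E + 1 / (2 * p) * E = (1/p) * E := by
    field_simp
    ring
  linarith [hgb, hVfinal, hBI, hcoef]
end
end

section
/- Let g : ℝ^d → ℝ be Lipschitz and V : ℝ^d → ℝ continuous with V(x) = O(|x|^p). Define u(x,t) as the classical value function with exponent p ∈ (1,∞). Then u satisfies the dynamic programming principle: for 0 ≤ s ≤ t < T and x ∈ ℝ^d, u(x,t) = inf{ u(γ(s), s) + ∫_s^t ((1/p)|γ'(r)|^p − V(γ(r))) dr : γ ∈ AC_p([s,t];ℝ^d), γ(t) = x }. -/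
noncomputable section
open MeasureTheory Set Filter

/-- The classical value function `u(x,t)`. -/
def uVal {d : ℕ} (g V : EuclideanSpace ℝ (Fin d) → ℝ) (p t : ℝ)
    (x : EuclideanSpace ℝ (Fin d)) : ℝ :=
  sInf (uSet g V p t x)

namespace DPPAux

variable {d : ℕ} {p : ℝ} {γ γ' δ δ' : ℝ → EuclideanSpace ℝ (Fin d)} {a b s t : ℝ}
  {V : EuclideanSpace ℝ (Fin d) → ℝ}

lemma isPath_const (x : EuclideanSpace ℝ (Fin d)) (a b : ℝ) (hp : 0 < p) :
    IsPath (fun _ => x) (fun _ => (0 : EuclideanSpace ℝ (Fin d))) a b p := by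
  refine ⟨intervalIntegrable_const, fun s₁ s₂ _ _ _ => by simp, ?_⟩
  have : (fun s : ℝ => ‖(0 : EuclideanSpace ℝ (Fin d))‖ ^ p) = fun _ => (0:ℝ) := by
    funext s; simp [Real.zero_rpow hp.ne']
  rw [this]
  exact integrableOn_zero

lemma isPath_mono (h : IsPath γ γ' a b p) (h1 : a ≤ s) (h2 : s ≤ t) (h3 : t ≤ b) :
    IsPath γ γ' s t p := by
  refine ⟨h.1.mono_set ?_, fun s₁ s₂ hs₁ hs hs₂ => h.2.1 s₁ s₂ (h1.trans hs₁) hs (hs₂.trans h3),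
    h.2.2.mono_set (Icc_subset_Icc h1 h3)⟩
  rw [uIcc_of_le h2, uIcc_of_le (h1.trans (h2.trans h3))]
  exact Icc_subset_Icc h1 h3

lemma isPath_continuousOn (h : IsPath γ γ' a b p) (hab : a ≤ b) :
    ContinuousOn γ (Icc a b) := by
  have hprim : ContinuousOn (fun r => γ a + ∫ u in a..r, γ' u) (Icc a b) := by
    have := intervalIntegral.continuousOn_primitive_interval' h.1 left_mem_uIcc
    rw [uIcc_of_le hab] at this
    exact continuousOn_const.add this
  refine hprim.congr fun r hr => ?_
  have h2 := h.2.1 a r le_rfl hr.1 hr.2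
  dsimp only; rw [← h2]; abel

lemma integrand_intervalIntegrable (hV : Continuous V) (h : IsPath γ γ' a b p) (hab : a ≤ b) :
    IntervalIntegrable (fun r => (1 / p) * ‖γ' r‖ ^ p - V (γ r)) volume a b := by
  have h1 : IntervalIntegrable (fun r => ‖γ' r‖ ^ p) volume a b := by
    have := h.2.2
    rw [← uIcc_of_le hab] at this
    exact this.intervalIntegrable
  have h2 : IntervalIntegrable (fun r => V (γ r)) volume a b := by
    apply ContinuousOn.intervalIntegrable
    rw [uIcc_of_le hab]
    exact hV.comp_continuousOn (isPath_continuousOn h hab)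
  exact (h1.const_mul _).sub h2

lemma ae_ne (s : ℝ) : ∀ᵐ r : ℝ, r ≠ s := by
  have h : (volume : Measure ℝ) {s} = 0 := measure_singleton s
  rw [ae_iff]
  simpa [not_not, Set.setOf_eq_eq_singleton] using h

lemma isPath_concat (hs : 0 ≤ s) (hst : s ≤ t)
    (hδ : IsPath δ δ' 0 s p) (hγ : IsPath γ γ' s t p) (hmatch : δ s = γ s) :
    IsPath (fun r => if r ≤ s then δ r else γ r) (fun r => if r < s then δ' r else γ' r) 0 t p := by
  set η : ℝ → EuclideanSpace ℝ (Fin d) := fun r => if r ≤ s then δ r else γ r with hη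
  set η' : ℝ → EuclideanSpace ℝ (Fin d) := fun r => if r < s then δ' r else γ' r with hη'
  have hηδ : ∀ r, r ≤ s → η r = δ r := fun r hr => if_pos hr
  have hηγ : ∀ r, s ≤ r → η r = γ r := by
    intro r hr
    by_cases h : r ≤ s
    · have : r = s := le_antisymm h hr
      simp [hη, this, hmatch]
    · exact if_neg h
  have hη'γ : ∀ r, s ≤ r → η' r = γ' r := fun r hr => if_neg (not_lt.2 hr)
  have hI1 : IntervalIntegrable η' volume 0 s := by
    refine hδ.1.congr_ae ?_
    rw [uIoc_of_le hs]
    filter_upwards [ae_restrict_mem measurableSet_Ioc,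
      (ae_ne s).filter_mono (ae_mono Measure.restrict_le_self)] with r hr hrs
    have : r < s := lt_of_le_of_ne hr.2 hrs
    simp [hη', this]
  have hI2 : IntervalIntegrable η' volume s t := by
    refine hγ.1.congr_ae ?_
    rw [uIoc_of_le hst]
    filter_upwards [ae_restrict_mem measurableSet_Ioc] with r hr
    exact (hη'γ r hr.1.le).symm
  refine ⟨hI1.trans hI2, ?_, ?_⟩
  · intro s₁ s₂ h0 h12 h2t
    rcases le_total s₂ s with hA | hA
    · rw [hηδ s₁ (h12.trans hA), hηδ s₂ hA, hδ.2.1 s₁ s₂ h0 h12 hA]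
      refine intervalIntegral.integral_congr_ae ?_
      rw [uIoc_of_le h12]
      filter_upwards [ae_ne s] with r hrs hr
      have : r < s := lt_of_le_of_ne (hr.2.trans hA) hrs
      simp [hη', this]
    · rcases le_total s s₁ with hB | hB
      · rw [hηγ s₁ hB, hηγ s₂ (hB.trans h12), hγ.2.1 s₁ s₂ hB h12 h2t]
        refine (intervalIntegral.integral_congr ?_).symm
        intro r hr
        rw [uIcc_of_le h12] at hr
        exact hη'γ r (hB.trans hr.1)
      · have hJ1 : IntervalIntegrable η' volume s₁ s :=
          hI1.mono_set (by rw [uIcc_of_le hB, uIcc_of_le hs]; exact Icc_subset_Icc h0 le_rfl)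
        have hJ2 : IntervalIntegrable η' volume s s₂ :=
          hI2.mono_set (by rw [uIcc_of_le hA, uIcc_of_le hst]; exact Icc_subset_Icc le_rfl h2t)
        rw [← intervalIntegral.integral_add_adjacent_intervals hJ1 hJ2]
        have e1 : ∫ r in s₁..s, η' r = ∫ r in s₁..s, δ' r := by
          refine intervalIntegral.integral_congr_ae ?_
          rw [uIoc_of_le hB]
          filter_upwards [ae_ne s] with r hrs hr
          have : r < s := lt_of_le_of_ne hr.2 hrs
          simp [hη', this]
        have e2 : ∫ r in s..s₂, η' r = ∫ r in s..s₂, γ' r := by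
          refine intervalIntegral.integral_congr ?_
          intro r hr
          rw [uIcc_of_le hA] at hr
          exact hη'γ r hr.1
        rw [e1, e2, ← hδ.2.1 s₁ s h0 hB le_rfl, ← hγ.2.1 s s₂ le_rfl hA h2t,
          hηδ s₁ (hB), hηγ s₂ hA, hmatch]
        abel
  · have int1 : IntegrableOn (fun r => ‖η' r‖ ^ p) (Icc 0 s) := by
      refine hδ.2.2.congr_fun_ae ?_
      filter_upwards [ae_restrict_mem measurableSet_Icc,
        (ae_ne s).filter_mono (ae_mono Measure.restrict_le_self)] with r hr hrs
      have : r < s := lt_of_le_of_ne hr.2 hrs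
      simp [hη', this]
    have int2 : IntegrableOn (fun r => ‖η' r‖ ^ p) (Icc s t) := by
      refine hγ.2.2.congr_fun ?_ measurableSet_Icc
      intro r hr
      show ‖γ' r‖ ^ p = ‖η' r‖ ^ p
      rw [hη'γ r hr.1]
    exact (int1.union int2).mono_set (Icc_subset_Icc_union_Icc)

end DPPAux

/-- Dynamic programming principle for the classical value function: for
`0 ≤ s ≤ t < T`,
`u(x,t) = inf { u(γ(s),s) + ∫_s^t ((1/p)|γ'|^p − V(γ)) dr : γ ∈ AC_p([s,t];ℝ^d), γ(t)=x }`. -/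
theorem classical_dynamic_programming {d : ℕ} (p : ℝ) (hp : 1 < p)
    (g V : EuclideanSpace ℝ (Fin d) → ℝ) (L : ℝ)
    (hg : LipschitzWith (Real.toNNReal L) g) (hV : Continuous V)
    (hVg : ∃ a b : ℝ, ∀ x, |V x| ≤ a * ‖x‖ ^ p + b)
    (T : ℝ) (hT : 0 < T)
    (hfin : ∀ (x : EuclideanSpace ℝ (Fin d)) (t : ℝ), 0 ≤ t → t < T →
      BddBelow (uSet g V p t x)) :
    ∀ (x : EuclideanSpace ℝ (Fin d)) (s t : ℝ), 0 ≤ s → s ≤ t → t < T →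
      uVal g V p t x =
        sInf {r | ∃ γ γ' : ℝ → EuclideanSpace ℝ (Fin d), IsPath γ γ' s t p ∧ γ t = x ∧
          r = uVal g V p s (γ s) +
              ∫ r' in s..t, ((1 / p) * ‖γ' r'‖ ^ p - V (γ r'))} := by
  intro x s t hs hst htT
  have h0t : 0 ≤ t := hs.trans hst
  have hsT : s < T := lt_of_le_of_lt hst htT
  have hp0 : 0 < p := lt_trans one_pos hp
  have hne : ∀ (y : EuclideanSpace ℝ (Fin d)) (τ : ℝ), (uSet g V p τ y).Nonempty :=
    fun y τ => ⟨_, fun _ => y, fun _ => 0, DPPAux.isPath_const y 0 τ hp0, rfl, rfl⟩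
  set B := {r | ∃ γ γ' : ℝ → EuclideanSpace ℝ (Fin d), IsPath γ γ' s t p ∧ γ t = x ∧
          r = uVal g V p s (γ s) +
              ∫ r' in s..t, ((1 / p) * ‖γ' r'‖ ^ p - V (γ r'))} with hBdef
  have key1 : ∀ r ∈ B, uVal g V p t x ≤ r := by
    rintro r ⟨γ, γ', hγ, hγt, rfl⟩
    refine le_of_forall_pos_le_add fun ε hε => ?_
    obtain ⟨v, hv, hvlt⟩ := Real.lt_sInf_add_pos (hne (γ s) s) hε
    obtain ⟨δ, δ', hδ, hδ0, rfl⟩ := hv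
    set η : ℝ → EuclideanSpace ℝ (Fin d) := fun r => if r ≤ s then δ r else γ r with hηdef
    set η' : ℝ → EuclideanSpace ℝ (Fin d) := fun r => if r < s then δ' r else γ' r with hη'def
    have hηγ : ∀ r, s ≤ r → η r = γ r := by
      intro r hr
      by_cases h : r ≤ s
      · have : r = s := le_antisymm h hr
        simp [hηdef, this, hδ0]
      · exact if_neg h
    have hcat : IsPath η η' 0 t p := DPPAux.isPath_concat hs hst hδ hγ hδ0
    have hηt : η t = x := by rw [hηγ t hst, hγt]
    have hηs : IsPath η η' 0 s p := DPPAux.isPath_mono hcat le_rfl hs hst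
    have hηst : IsPath η η' s t p := DPPAux.isPath_mono hcat hs hst le_rfl
    have hsplit : (∫ r in (0:ℝ)..t, ((1 / p) * ‖η' r‖ ^ p - V (η r)))
        = (∫ r in (0:ℝ)..s, ((1 / p) * ‖η' r‖ ^ p - V (η r)))
          + ∫ r in s..t, ((1 / p) * ‖η' r‖ ^ p - V (η r)) :=
      (intervalIntegral.integral_add_adjacent_intervals
        (DPPAux.integrand_intervalIntegrable hV hηs hs)
        (DPPAux.integrand_intervalIntegrable hV hηst hst)).symm
    have e1 : (∫ r in (0:ℝ)..s, ((1 / p) * ‖η' r‖ ^ p - V (η r)))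
        = ∫ r in (0:ℝ)..s, ((1 / p) * ‖δ' r‖ ^ p - V (δ r)) := by
      refine intervalIntegral.integral_congr_ae ?_
      rw [uIoc_of_le hs]
      filter_upwards [DPPAux.ae_ne s] with r hrs hr
      have h1 : r < s := lt_of_le_of_ne hr.2 hrs
      simp [hηdef, hη'def, h1, h1.le]
    have e2 : (∫ r in s..t, ((1 / p) * ‖η' r‖ ^ p - V (η r)))
        = ∫ r in s..t, ((1 / p) * ‖γ' r‖ ^ p - V (γ r)) := by
      refine intervalIntegral.integral_congr fun r hr => ?_
      rw [uIcc_of_le hst] at hr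
      show (1 / p) * ‖η' r‖ ^ p - V (η r) = (1 / p) * ‖γ' r‖ ^ p - V (γ r)
      rw [hηγ r hr.1, show η' r = γ' r from if_neg (not_lt.2 hr.1)]
    have hmem : g (η 0) + (∫ r in (0:ℝ)..t, ((1 / p) * ‖η' r‖ ^ p - V (η r)))
        ∈ uSet g V p t x := ⟨η, η', hcat, hηt, rfl⟩
    have hle : uVal g V p t x
        ≤ g (η 0) + ∫ r in (0:ℝ)..t, ((1 / p) * ‖η' r‖ ^ p - V (η r)) :=
      csInf_le (hfin x t h0t htT) hmem
    have hη0 : η 0 = δ 0 := if_pos hs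
    rw [hη0, hsplit, e1, e2] at hle
    have hvlt' : g (δ 0) + (∫ r in (0:ℝ)..s, ((1 / p) * ‖δ' r‖ ^ p - V (δ r)))
        < uVal g V p s (γ s) + ε := hvlt
    linarith
  have hBne : B.Nonempty :=
    ⟨_, fun _ => x, fun _ => 0, DPPAux.isPath_const x s t hp0, rfl, rfl⟩
  refine le_antisymm (le_csInf hBne key1) (le_csInf (hne x t) ?_)
  rintro r ⟨γ, γ', hγ, hγt, rfl⟩
  have hγ0s : IsPath γ γ' 0 s p := DPPAux.isPath_mono hγ le_rfl hs hst
  have hγst : IsPath γ γ' s t p := DPPAux.isPath_mono hγ hs hst le_rfl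
  have hmemB : uVal g V p s (γ s) + (∫ r' in s..t, ((1 / p) * ‖γ' r'‖ ^ p - V (γ r'))) ∈ B :=
    ⟨γ, γ', hγst, hγt, rfl⟩
  have hBbdd : BddBelow B := ⟨uVal g V p t x, fun r hr => key1 r hr⟩
  refine (csInf_le hBbdd hmemB).trans ?_
  have h1 : uVal g V p s (γ s)
      ≤ g (γ 0) + ∫ r' in (0:ℝ)..s, ((1 / p) * ‖γ' r'‖ ^ p - V (γ r')) :=
    csInf_le (hfin (γ s) s hs hsT) ⟨γ, γ', hγ0s, rfl, rfl⟩
  have hsplit : (∫ r' in (0:ℝ)..t, ((1 / p) * ‖γ' r'‖ ^ p - V (γ r')))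
      = (∫ r' in (0:ℝ)..s, ((1 / p) * ‖γ' r'‖ ^ p - V (γ r')))
        + ∫ r' in s..t, ((1 / p) * ‖γ' r'‖ ^ p - V (γ r')) :=
    (intervalIntegral.integral_add_adjacent_intervals
      (DPPAux.integrand_intervalIntegrable hV hγ0s hs)
      (DPPAux.integrand_intervalIntegrable hV hγst hst)).symm
  linarith
end
end

section
/- Let (X,d) be a geodesic metric space, g : X → ℝ Lipschitz, and p ∈ (1,∞). Define U(x,t) = inf{ g(σ(0)) + (1/p)∫_0^t |σ'(s)|^p ds : σ ∈ AC_p([0,t];X), σ(t) = x }. Then U(x,t) = inf_{y ∈ X} { g(y) + d(x,y)^p / (p t^{p−1}) } for all x ∈ X and t > 0. -/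
noncomputable section
open MeasureTheory Set Filter

/-- `m` is an upper gradient/AC bound for the curve `σ` on `[a,b]`. -/
def IsACBound {X : Type} [PseudoMetricSpace X] (σ : ℝ → X) (m : ℝ → ℝ) (a b : ℝ) : Prop :=
  ∀ s₁ s₂ : ℝ, a ≤ s₁ → s₁ ≤ s₂ → s₂ ≤ b →
    dist (σ s₁) (σ s₂) ≤ ∫ u in s₁..s₂, m u

/-- `m` is the metric derivative of `σ` on `[a,b]`. -/
def IsMetricDeriv {X : Type} [PseudoMetricSpace X] (σ : ℝ → X) (m : ℝ → ℝ) (a b : ℝ) : Prop :=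
  (∀ s, 0 ≤ m s) ∧ IntegrableOn m (Icc a b) ∧ IsACBound σ m a b ∧
    ∀ h : ℝ → ℝ, (∀ s, 0 ≤ h s) → IntegrableOn h (Icc a b) → IsACBound σ h a b →
      ∀ᵐ s ∂(volume.restrict (Icc a b)), m s ≤ h s

/-- Every pair of points is joined by a constant-speed geodesic defined on `[0,1]`. -/
def IsGeodesicSpace (X : Type) [MetricSpace X] : Prop :=
  ∀ x y : X, ∃ γ : ℝ → X, γ 0 = x ∧ γ 1 = y ∧
    ∀ s₁ ∈ Icc (0:ℝ) 1, ∀ s₂ ∈ Icc (0:ℝ) 1, dist (γ s₁) (γ s₂) = |s₂ - s₁| * dist x y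

/-- The set of action values `g(σ(0)) + (1/p)∫_0^t |σ'|^p` over AC_p curves ending at
`x` at time `t`. -/
def hlSet {X : Type} [MetricSpace X] (g : X → ℝ) (p t : ℝ) (x : X) : Set ℝ :=
  {r | ∃ (σ : ℝ → X) (m : ℝ → ℝ), IsMetricDeriv σ m 0 t ∧
        IntegrableOn (fun s => m s ^ p) (Icc 0 t) ∧ σ t = x ∧
        r = g (σ 0) + ∫ s in (0:ℝ)..t, (1 / p) * m s ^ p}

open Topology in
/-- If the integral of `h` over every subinterval of `[0,t]` is at least `c` times the
length of the interval, then `c ≤ h` a.e. on `[0,t]`. -/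
lemma ae_const_le_of_intervals {c t : ℝ} (ht : 0 < t) {h : ℝ → ℝ}
    (hint : IntegrableOn h (Icc 0 t))
    (hb : ∀ s₁ s₂ : ℝ, 0 ≤ s₁ → s₁ ≤ s₂ → s₂ ≤ t → c * (s₂ - s₁) ≤ ∫ u in s₁..s₂, h u) :
    ∀ᵐ s ∂(volume.restrict (Icc 0 t)), c ≤ h s := by
  classical
  set f : ℝ → ℝ := fun s => if s ∈ Icc (0:ℝ) t then h s else c with hfdef
  have hfl : LocallyIntegrable f (volume : Measure ℝ) := by
    have hfeq : f = (Icc (0:ℝ) t).indicator (fun s => h s - c) + fun _ => c := by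
      funext s
      by_cases hs : s ∈ Icc (0:ℝ) t
      · simp only [hfdef, if_pos hs, Pi.add_apply, Set.indicator_of_mem hs]; ring
      · simp only [hfdef, if_neg hs, Pi.add_apply, Set.indicator_of_notMem hs]; ring
    rw [hfeq]
    have h1 : Integrable ((Icc (0:ℝ) t).indicator (fun s => h s - c)) (volume : Measure ℝ) := by
      rw [integrable_indicator_iff measurableSet_Icc]
      exact hint.sub (integrableOn_const (by simp [Real.volume_Icc]))
    exact h1.locallyIntegrable.add (locallyIntegrable_const c)
  have hae := IsUnifLocDoublingMeasure.ae_tendsto_average (μ := (volume : Measure ℝ)) hfl 1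
  have hae' : ∀ᵐ s ∂(volume.restrict (Icc 0 t)), s ∈ Ioo 0 t := by
    rw [Measure.restrict_congr_set Ioo_ae_eq_Icc.symm]
    exact ae_restrict_mem measurableSet_Ioo
  filter_upwards [ae_restrict_of_ae hae, hae', ae_restrict_mem measurableSet_Icc]
    with s hs hsIoo hsIcc
  have hconv : Tendsto (fun r : ℝ => ⨍ y in Metric.closedBall s r, f y) (𝓝[>] (0:ℝ)) (𝓝 (f s)) := by
    apply hs (fun _ => s) id tendsto_id
    filter_upwards [self_mem_nhdsWithin] with r hr
    simp only [Metric.mem_closedBall, dist_self, one_mul]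
    exact le_of_lt hr
  have hev : ∀ᶠ r in 𝓝[>] (0:ℝ), c ≤ ⨍ y in Metric.closedBall s r, f y := by
    have hmin : (0:ℝ) < min s (t - s) := lt_min hsIoo.1 (sub_pos.2 hsIoo.2)
    filter_upwards [Ioo_mem_nhdsGT_of_mem (Set.left_mem_Ico.2 hmin)] with r hr
    have hr0 : 0 < r := hr.1
    have hrs : r < s := hr.2.trans_le (min_le_left _ _)
    have hrt : r < t - s := hr.2.trans_le (min_le_right _ _)
    have hsub : Metric.closedBall s r ⊆ Icc (0:ℝ) t := by
      rw [Real.closedBall_eq_Icc]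
      exact Icc_subset_Icc (by linarith) (by linarith)
    have hintg : ∫ y in Metric.closedBall s r, f y = ∫ u in (s - r)..(s + r), h u := by
      rw [Real.closedBall_eq_Icc, intervalIntegral.integral_of_le (by linarith),
        ← integral_Icc_eq_integral_Ioc]
      refine setIntegral_congr_fun measurableSet_Icc fun z hz => ?_
      have : z ∈ Icc (0:ℝ) t := by
        rw [Real.closedBall_eq_Icc] at hsub; exact hsub hz
      simp only [hfdef, if_pos this]
    have hvol : (volume (Metric.closedBall s r)).toReal = 2 * r := by
      rw [Real.volume_closedBall, ENNReal.toReal_ofReal (by linarith)]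
    rw [setAverage_eq, hintg, measureReal_def, hvol, smul_eq_mul]
    have hge : c * (2 * r) ≤ ∫ u in (s - r)..(s + r), h u := by
      have := hb (s - r) (s + r) (by linarith) (by linarith) (by linarith)
      simpa [show s + r - (s - r) = 2 * r by ring] using this
    calc c = (2 * r)⁻¹ * (c * (2 * r)) := by field_simp
      _ ≤ (2 * r)⁻¹ * ∫ u in (s - r)..(s + r), h u := by
          apply mul_le_mul_of_nonneg_left hge (by positivity)
  have : c ≤ f s := ge_of_tendsto hconv hev
  simpa only [hfdef, if_pos hsIcc] using this

/-- Jensen/Hölder: `(∫ m)^p ≤ (∫ m^p) * t^(p-1)` on `[0,t]`. -/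
lemma holder_pow {t p : ℝ} (ht : 0 < t) (hp : 1 < p) {m : ℝ → ℝ} (hm0 : ∀ s, 0 ≤ m s)
    (hmi : IntegrableOn m (Icc 0 t))
    (hmp : IntegrableOn (fun s => m s ^ p) (Icc 0 t)) :
    (∫ s in Icc (0:ℝ) t, m s) ^ p ≤ (∫ s in Icc (0:ℝ) t, m s ^ p) * t ^ (p - 1) := by
  set μ := (volume : Measure ℝ).restrict (Icc (0:ℝ) t) with hμ
  have hμuniv : μ univ = ENNReal.ofReal t := by
    rw [hμ, Measure.restrict_apply_univ, Real.volume_Icc, sub_zero]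
  haveI : IsFiniteMeasure μ := ⟨by rw [hμuniv]; exact ENNReal.ofReal_lt_top⟩
  have hp0 : (0:ℝ) < p := by linarith
  have hq : p.HolderConjugate (p / (p - 1)) := Real.HolderConjugate.conjExponent hp
  set q := p / (p - 1) with hqdef
  have hmeas : AEStronglyMeasurable m μ := hmi.aestronglyMeasurable
  have hmemp : MemLp m (ENNReal.ofReal p) μ := by
    have h1 := (memLp_norm_rpow_iff (p := ENNReal.ofReal p) (q := ENNReal.ofReal p) hmeas
      (ENNReal.ofReal_pos.2 hp0).ne' ENNReal.ofReal_ne_top)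
    rw [ENNReal.div_self (ENNReal.ofReal_pos.2 hp0).ne' ENNReal.ofReal_ne_top] at h1
    rw [← h1, memLp_one_iff_integrable]
    apply hmp.congr
    filter_upwards with s
    rw [ENNReal.toReal_ofReal hp0.le, Real.norm_of_nonneg (hm0 s)]
  have hmemq : MemLp (fun _ : ℝ => (1:ℝ)) (ENNReal.ofReal q) μ := memLp_const 1
  have hH := integral_mul_le_Lp_mul_Lq_of_nonneg hq
    (Filter.Eventually.of_forall fun s => hm0 s)
    (Filter.Eventually.of_forall fun _ => zero_le_one) hmemp hmemq
  simp only [mul_one, Real.one_rpow] at hH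
  have hIone : ∫ _ : ℝ, (1:ℝ) ∂μ = t := by
    rw [integral_const, smul_eq_mul, mul_one, measureReal_def, hμuniv, ENNReal.toReal_ofReal ht.le]
  rw [hIone] at hH
  have hI0 : 0 ≤ ∫ s, m s ∂μ := integral_nonneg fun s => hm0 s
  have hJ0 : 0 ≤ ∫ s, m s ^ p ∂μ := integral_nonneg fun s => Real.rpow_nonneg (hm0 s) p
  have key : (∫ s, m s ∂μ) ^ p ≤ ((∫ s, m s ^ p ∂μ) ^ (1/p) * t ^ (1/q)) ^ p :=
    Real.rpow_le_rpow hI0 hH hp0.le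
  calc (∫ s in Icc (0:ℝ) t, m s) ^ p = (∫ s, m s ∂μ) ^ p := rfl
    _ ≤ ((∫ s, m s ^ p ∂μ) ^ (1/p) * t ^ (1/q)) ^ p := key
    _ = (∫ s, m s ^ p ∂μ) * t ^ (p - 1) := by
        rw [Real.mul_rpow (Real.rpow_nonneg hJ0 _) (Real.rpow_nonneg ht.le _),
          ← Real.rpow_mul hJ0, ← Real.rpow_mul ht.le,
          one_div_mul_cancel hp0.ne', Real.rpow_one,
          show 1 / q * p = p - 1 by rw [hqdef]; field_simp]

/-- Young-type lower bound used to show the infimum sets are bounded below. -/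
lemma lb_aux {p A : ℝ} (hp : 1 < p) (hA : 0 < A) {K' d : ℝ} (hK' : 0 ≤ K') (hd : 0 ≤ d) :
    K' * d ≤ K' * (K' * A) ^ (1 / (p - 1)) + d ^ p / A := by
  set D := (K' * A) ^ (1 / (p - 1)) with hD
  have hD0 : 0 ≤ D := Real.rpow_nonneg (by positivity) _
  rcases le_or_gt d D with hcase | hcase
  · have : K' * d ≤ K' * D := mul_le_mul_of_nonneg_left hcase hK'
    have h2 : 0 ≤ d ^ p / A := div_nonneg (Real.rpow_nonneg hd _) hA.le
    linarith
  · have hd0 : 0 < d := hD0.trans_lt hcase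
    have hkey : K' * A ≤ d ^ (p - 1) := by
      have h1 : D ^ (p - 1) ≤ d ^ (p - 1) :=
        Real.rpow_le_rpow hD0 hcase.le (by linarith)
      have h2 : D ^ (p - 1) = K' * A := by
        rw [hD, ← Real.rpow_mul (by positivity),
          one_div_mul_cancel (by linarith : p - 1 ≠ 0), Real.rpow_one]
      linarith [h2 ▸ h1]
    have hdp : d ^ p = d ^ (p - 1) * d := by
      rw [← Real.rpow_add_one hd0.ne' (p - 1)]; ring_nf
    have h1 : K' * A * d ≤ d ^ p := by
      rw [hdp]; exact mul_le_mul_of_nonneg_right hkey hd0.le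
    have h3 : K' * d ≤ d ^ p / A := by
      rw [le_div_iff₀ hA]
      calc K' * d * A = K' * A * d := by ring
        _ ≤ d ^ p := h1
    have h4 : 0 ≤ K' * D := by positivity
    linarith

/-- The value of the constant-speed geodesic from `y` to `x` belongs to `hlSet`. -/
lemma geodesic_mem_hlSet {X : Type} [MetricSpace X] (hgeo : IsGeodesicSpace X)
    (g : X → ℝ) {p t : ℝ} (hp : 1 < p) (ht : 0 < t) (x y : X) :
    g y + dist x y ^ p / (p * t ^ (p - 1)) ∈ hlSet g p t x := by
  obtain ⟨γ, hγ0, hγ1, hγd⟩ := hgeo y x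
  set c := dist y x / t with hc
  have hc0 : 0 ≤ c := div_nonneg dist_nonneg ht.le
  have hp0 : (0:ℝ) < p := by linarith
  have hdist : ∀ s₁ s₂ : ℝ, 0 ≤ s₁ → s₁ ≤ s₂ → s₂ ≤ t →
      dist (γ (s₁ / t)) (γ (s₂ / t)) = c * (s₂ - s₁) := by
    intro s₁ s₂ h0 h12 h2t
    rw [hγd (s₁ / t) ⟨div_nonneg h0 ht.le, (div_le_one ht).2 (h12.trans h2t)⟩ (s₂ / t)
      ⟨div_nonneg (h0.trans h12) ht.le, (div_le_one ht).2 h2t⟩,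
      abs_of_nonneg (sub_nonneg.2 (by gcongr))]
    rw [hc]; field_simp
  refine ⟨fun s => γ (s / t), fun _ => c, ⟨fun _ => hc0, ?_, ?_, ?_⟩, ?_, ?_, ?_⟩
  · exact integrableOn_const (by simp [Real.volume_Icc])
  · intro s₁ s₂ h0 h12 h2t
    rw [hdist s₁ s₂ h0 h12 h2t, intervalIntegral.integral_const, smul_eq_mul]
    exact le_of_eq (by ring)
  · intro h hh0 hhi hhb
    refine ae_const_le_of_intervals ht hhi fun s₁ s₂ h0 h12 h2t => ?_
    have hb := hhb s₁ s₂ h0 h12 h2t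
    rwa [hdist s₁ s₂ h0 h12 h2t] at hb
  · exact integrableOn_const (by simp [Real.volume_Icc])
  · show γ (t / t) = x
    rw [div_self ht.ne']; exact hγ1
  · show _ = g (γ (0 / t)) + ∫ s in (0:ℝ)..t, (1 / p) * c ^ p
    rw [zero_div, hγ0, intervalIntegral.integral_const, smul_eq_mul, sub_zero]
    congr 1
    have hcp : c ^ p = dist y x ^ p / t ^ p := by
      rw [hc]; exact Real.div_rpow dist_nonneg ht.le p
    have htp : t ^ p = t * t ^ (p - 1) := by
      nth_rewrite 1 [show p = 1 + (p - 1) by ring]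
      rw [Real.rpow_add ht, Real.rpow_one]
    rw [dist_comm x y, hcp, htp]
    have h1 : t ^ (p - 1) ≠ 0 := (Real.rpow_pos_of_pos ht _).ne'
    field_simp

/-- Metric Hopf–Lax formula (Example 3.1, `V ≡ 0`): in a geodesic metric space, with
`g` Lipschitz and `p ∈ (1,∞)`,
`U(x,t) = inf_y { g(y) + d(x,y)^p/(p t^{p-1}) }` for all `x` and `t > 0`. -/
theorem hopf_lax {X : Type} [MetricSpace X] (hgeo : IsGeodesicSpace X)
    (g : X → ℝ) (K : ℝ) (hg : LipschitzWith (Real.toNNReal K) g)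
    (p : ℝ) (hp : 1 < p) :
    ∀ (x : X) (t : ℝ), 0 < t →
      sInf (hlSet g p t x) = sInf {r | ∃ y : X, r = g y + dist x y ^ p / (p * t ^ (p - 1))} := by
  intro x t ht
  have hp0 : (0:ℝ) < p := by linarith
  have hA0 : 0 < p * t ^ (p - 1) := mul_pos hp0 (Real.rpow_pos_of_pos ht _)
  set K' := ((Real.toNNReal K : NNReal) : ℝ) with hK'
  have hK'0 : 0 ≤ K' := NNReal.coe_nonneg _
  set L := g x - K' * (K' * (p * t ^ (p - 1))) ^ (1 / (p - 1)) with hL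
  set S := {r | ∃ y : X, r = g y + dist x y ^ p / (p * t ^ (p - 1))} with hS
  have hSlb : ∀ r ∈ S, L ≤ r := by
    rintro r ⟨y, rfl⟩
    have hgxy : g x - g y ≤ K' * dist x y := by
      have h1 := hg.dist_le_mul x y
      rw [Real.dist_eq] at h1
      exact (le_abs_self (g x - g y)).trans h1
    have h2 := lb_aux hp hA0 hK'0 (dist_nonneg : 0 ≤ dist x y)
    rw [hL]; linarith
  have hSne : S.Nonempty := ⟨g x + dist x x ^ p / (p * t ^ (p - 1)), x, rfl⟩
  have hmem : ∀ y : X, g y + dist x y ^ p / (p * t ^ (p - 1)) ∈ hlSet g p t x :=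
    fun y => geodesic_mem_hlSet hgeo g hp ht x y
  have hlow : ∀ r ∈ hlSet g p t x, sInf S ≤ r := by
    rintro r ⟨σ, m, ⟨hm0, hmi, hmb, _⟩, hmp, hσt, rfl⟩
    have hd : dist x (σ 0) ≤ ∫ s in Icc (0:ℝ) t, m s := by
      have h1 := hmb 0 t le_rfl ht.le le_rfl
      rw [intervalIntegral.integral_of_le ht.le, ← integral_Icc_eq_integral_Ioc] at h1
      have h2 : dist x (σ 0) = dist (σ 0) (σ t) := by
        rw [dist_comm]; rw [hσt]
      rw [h2]; exact h1
    have hdp : dist x (σ 0) ^ p ≤ (∫ s in Icc (0:ℝ) t, m s) ^ p :=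
      Real.rpow_le_rpow dist_nonneg hd hp0.le
    have hH := holder_pow ht hp hm0 hmi hmp
    have hint : ∫ s in (0:ℝ)..t, (1 / p) * m s ^ p
        = (1 / p) * ∫ s in Icc (0:ℝ) t, m s ^ p := by
      rw [intervalIntegral.integral_const_mul, intervalIntegral.integral_of_le ht.le,
        ← integral_Icc_eq_integral_Ioc]
    have hfinal : g (σ 0) + dist x (σ 0) ^ p / (p * t ^ (p - 1))
        ≤ g (σ 0) + ∫ s in (0:ℝ)..t, (1 / p) * m s ^ p := by
      rw [hint]
      have hJ : dist x (σ 0) ^ p ≤ (∫ s in Icc (0:ℝ) t, m s ^ p) * t ^ (p - 1) :=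
        le_trans hdp hH
      have h3 : dist x (σ 0) ^ p / (p * t ^ (p - 1))
          ≤ (1 / p) * ∫ s in Icc (0:ℝ) t, m s ^ p := by
        rw [div_le_iff₀ hA0]
        calc dist x (σ 0) ^ p ≤ (∫ s in Icc (0:ℝ) t, m s ^ p) * t ^ (p - 1) := hJ
          _ = 1 / p * (∫ s in Icc (0:ℝ) t, m s ^ p) * (p * t ^ (p - 1)) := by
              field_simp
      linarith
    exact le_trans (csInf_le ⟨L, hSlb⟩ ⟨σ 0, rfl⟩) hfinal
  have hlne : (hlSet g p t x).Nonempty := ⟨_, hmem x⟩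
  apply le_antisymm
  · refine le_csInf hSne ?_
    rintro r ⟨y, rfl⟩
    exact csInf_le ⟨sInf S, fun r' hr' => hlow r' hr'⟩ (hmem y)
  · exact le_csInf hlne hlow
end
end

section
/- Let (X,d) be a geodesic metric space, g : X → ℝ Lipschitz, and ℓ : [0,∞) → [0,∞) increasing and convex. Define U(x,t) = inf{ g(σ(0)) + ∫_0^t ℓ(|σ'(s)|) ds : σ ∈ AC([0,t];X), σ(t) = x }. Then U(x,t) = inf_{y ∈ X} { g(y) + t·ℓ(d(x,y)/t) } for all x ∈ X and t > 0. -/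
noncomputable section
open MeasureTheory Set Filter Topology

/-- The set of action values `g(σ(0)) + ∫_0^t ℓ(|σ'(s)|) ds` over absolutely continuous
curves ending at `x` at time `t`. -/
def hlSetL {X : Type} [MetricSpace X] (g : X → ℝ) (ℓ : ℝ → ℝ) (t : ℝ) (x : X) : Set ℝ :=
  {r | ∃ (σ : ℝ → X) (m : ℝ → ℝ), IsMetricDeriv σ m 0 t ∧
        IntegrableOn (fun s => ℓ (m s)) (Icc 0 t) ∧ σ t = x ∧
        r = g (σ 0) + ∫ s in (0:ℝ)..t, ℓ (m s)}

/-- A monotone convex function on `[0,∞)` is continuous on `[0,∞)`. -/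
lemma ellCont (ℓ : ℝ → ℝ) (hmono : MonotoneOn ℓ (Ici 0)) (hconv : ConvexOn ℝ (Ici 0) ℓ) :
    ContinuousOn ℓ (Ici 0) := by
  have hIoi : ContinuousOn ℓ (Ioi 0) := by
    have := hconv.continuousOn_interior
    rwa [interior_Ici] at this
  intro x hx
  rcases eq_or_lt_of_le (mem_Ici.1 hx : (0:ℝ) ≤ x) with h0 | h0
  · subst h0
    have hup : ∀ᶠ w in 𝓝[Ici (0:ℝ)] 0, ℓ w ≤ (1 - w) * ℓ 0 + w * ℓ 1 := by
      filter_upwards [Icc_mem_nhdsGE_of_mem (left_mem_Ico.2 one_pos)] with w hw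
      have h := hconv.2 (self_mem_Ici) (mem_Ici.2 zero_le_one)
        (by linarith [hw.2] : (0:ℝ) ≤ 1 - w) hw.1 (by ring)
      simpa using h
    have hlo : ∀ᶠ w in 𝓝[Ici (0:ℝ)] 0, ℓ 0 ≤ ℓ w := by
      filter_upwards [self_mem_nhdsWithin] with w hw
      exact hmono self_mem_Ici hw hw
    have hupt : Tendsto (fun w => (1 - w) * ℓ 0 + w * ℓ 1) (𝓝[Ici (0:ℝ)] 0) (𝓝 (ℓ 0)) := by
      have hc : Continuous fun w : ℝ => (1 - w) * ℓ 0 + w * ℓ 1 := by continuity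
      have h2 := (hc.tendsto 0).mono_left (nhdsWithin_le_nhds (s := Ici 0))
      simpa using h2
    exact tendsto_of_tendsto_of_tendsto_of_le_of_le' tendsto_const_nhds hupt hlo hup
  · exact (hIoi.continuousAt (Ioi_mem_nhds h0)).continuousWithinAt

/-- If all subinterval integrals of `h` dominate `c` times the interval length, then
`c ≤ h` almost everywhere on `[0,t]` (Lebesgue differentiation). -/
lemma aeConstLe (t c : ℝ) (ht : 0 < t) (h : ℝ → ℝ)
    (hint : IntegrableOn h (Icc 0 t))
    (H : ∀ s₁ s₂ : ℝ, 0 ≤ s₁ → s₁ ≤ s₂ → s₂ ≤ t → c * (s₂ - s₁) ≤ ∫ u in s₁..s₂, h u) :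
    ∀ᵐ s ∂(volume.restrict (Icc 0 t)), c ≤ h s := by
  set f := (Icc (0:ℝ) t).indicator h with hf
  have hfi : Integrable f := (integrable_indicator_iff measurableSet_Icc).2 hint
  have hdiff := IsUnifLocDoublingMeasure.ae_tendsto_average (μ := (volume : Measure ℝ))
    hfi.locallyIntegrable 1
  have main : ∀ᵐ x ∂(volume : Measure ℝ), x ∈ Ioo 0 t → c ≤ h x := by
    filter_upwards [hdiff] with x hx hmem
    have htend : Tendsto (fun r => ⨍ y in Metric.closedBall x r, f y) (𝓝[>] (0:ℝ))
        (𝓝 (f x)) := by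
      apply hx (fun _ => x) id tendsto_id
      filter_upwards [self_mem_nhdsWithin] with r hr
      exact Metric.mem_closedBall_self (by simpa using le_of_lt hr)
    have hev : ∀ᶠ r in 𝓝[>] (0:ℝ), c ≤ ⨍ y in Metric.closedBall x r, f y := by
      have hδ : (0:ℝ) < min x (t - x) := lt_min hmem.1 (by linarith [hmem.2])
      filter_upwards [Ioo_mem_nhdsGT_of_mem (left_mem_Ico.2 hδ)] with r hr
      obtain ⟨hr0, hrδ⟩ := hr
      have hrx : r < x := lt_of_lt_of_le hrδ (min_le_left _ _)
      have hrt : r < t - x := lt_of_lt_of_le hrδ (min_le_right _ _)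
      have h1 : 0 ≤ x - r := by linarith
      have h2 : x + r ≤ t := by linarith
      rw [Real.closedBall_eq_Icc, setAverage_eq]
      have hsub : Icc (x - r) (x + r) ⊆ Icc 0 t := Icc_subset_Icc h1 h2
      have hA : ∫ y in Icc (x - r) (x + r), f y = ∫ u in (x - r)..(x + r), h u := by
        rw [intervalIntegral.integral_of_le (by linarith), ← integral_Icc_eq_integral_Ioc]
        exact setIntegral_congr_fun measurableSet_Icc
          (fun y hy => indicator_of_mem (hsub hy) h)
      have hvol : (volume (Icc (x - r) (x + r))).toReal = 2 * r := by
        rw [Real.volume_Icc, ENNReal.toReal_ofReal (by linarith)]; ring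
      rw [hA, measureReal_def, hvol]
      have hI : c * (2 * r) ≤ ∫ u in (x - r)..(x + r), h u := by
        calc c * (2 * r) = c * ((x + r) - (x - r)) := by ring
          _ ≤ _ := H (x - r) (x + r) h1 (by linarith) h2
      have h2r : (0:ℝ) < 2 * r := by linarith
      rw [smul_eq_mul]
      calc c = (2 * r)⁻¹ * (c * (2 * r)) := by field_simp
        _ ≤ (2 * r)⁻¹ * ∫ u in (x - r)..(x + r), h u :=
            mul_le_mul_of_nonneg_left hI (inv_nonneg.2 h2r.le)
    have hc : c ≤ f x := ge_of_tendsto htend hev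
    rwa [hf, indicator_of_mem (Ioo_subset_Icc_self hmem)] at hc
  have hnull : (volume.restrict (Icc (0:ℝ) t)) (Ioo (0:ℝ) t)ᶜ = 0 := by
    rw [Measure.restrict_apply measurableSet_Ioo.compl]
    have hss : (Ioo (0:ℝ) t)ᶜ ∩ Icc 0 t ⊆ ({0, t} : Set ℝ) := by
      intro y hy
      obtain ⟨hy1, hy2⟩ := hy
      simp only [mem_compl_iff, mem_Ioo, not_and_or, not_lt] at hy1
      rcases hy1 with h | h
      · left; exact le_antisymm h hy2.1
      · right; exact le_antisymm hy2.2 h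
    refine measure_mono_null hss ?_
    exact ((Set.finite_singleton t).insert 0).measure_zero volume
  have hmem_ae : ∀ᵐ s ∂(volume.restrict (Icc (0:ℝ) t)), s ∈ Ioo 0 t := by
    rw [ae_iff]
    simpa [compl_def] using hnull
  filter_upwards [ae_restrict_of_ae main, hmem_ae] with s hs hm using hs hm

/-- Jensen's inequality for the average over `[0,t]`. -/
lemma jensenLe (t : ℝ) (ht : 0 < t) (ℓ : ℝ → ℝ) (hcont : ContinuousOn ℓ (Ici 0))
    (hconv : ConvexOn ℝ (Ici 0) ℓ) (m : ℝ → ℝ) (hm0 : ∀ s, 0 ≤ m s)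
    (hmi : IntegrableOn m (Icc 0 t)) (hℓi : IntegrableOn (fun s => ℓ (m s)) (Icc 0 t)) :
    t * ℓ ((∫ s in Icc (0:ℝ) t, m s) / t) ≤ ∫ s in Icc (0:ℝ) t, ℓ (m s) := by
  set μ := volume.restrict (Icc (0:ℝ) t) with hμ
  haveI : IsFiniteMeasure μ := by
    constructor
    rw [hμ, Measure.restrict_apply_univ, Real.volume_Icc]
    exact ENNReal.ofReal_lt_top
  haveI : NeZero μ := by
    refine ⟨fun hz => ?_⟩
    have h0 : μ Set.univ = 0 := by rw [hz]; simp
    rw [hμ, Measure.restrict_apply_univ, Real.volume_Icc] at h0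
    have := ENNReal.ofReal_eq_zero.1 h0
    linarith
  have hJ := hconv.map_average_le hcont isClosed_Ici
    (Filter.Eventually.of_forall fun s => hm0 s) hmi hℓi
  have havg : ∀ (f : ℝ → ℝ), (⨍ x, f x ∂μ) = (∫ x in Icc (0:ℝ) t, f x) / t := by
    intro f
    rw [average_eq, hμ, measureReal_def, Measure.restrict_apply_univ, Real.volume_Icc,
      ENNReal.toReal_ofReal (by linarith)]
    rw [sub_zero, smul_eq_mul, inv_mul_eq_div]
  rw [havg, havg] at hJ
  have h2 := mul_le_mul_of_nonneg_left hJ ht.le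
  calc t * ℓ ((∫ s in Icc (0:ℝ) t, m s) / t)
      ≤ t * ((∫ s in Icc (0:ℝ) t, ℓ (m s)) / t) := h2
    _ = ∫ s in Icc (0:ℝ) t, ℓ (m s) := by field_simp

/-- Generalized metric Hopf–Lax formula (Example 3.1, formula (3.2)): in a geodesic
metric space, with `g` Lipschitz and `ℓ : [0,∞) → [0,∞)` increasing and convex,
`U(x,t) = inf_y { g(y) + t ℓ(d(x,y)/t) }` for all `x` and `t > 0`. -/
theorem hopf_lax_general {X : Type} [MetricSpace X] (hgeo : IsGeodesicSpace X)
    (g : X → ℝ) (K : ℝ) (hg : LipschitzWith (Real.toNNReal K) g)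
    (ℓ : ℝ → ℝ) (hℓ0 : ∀ z, 0 ≤ z → 0 ≤ ℓ z) (hℓmono : MonotoneOn ℓ (Ici 0))
    (hℓconv : ConvexOn ℝ (Ici 0) ℓ) :
    ∀ (x : X) (t : ℝ), 0 < t →
      sInf (hlSetL g ℓ t x) = sInf {r | ∃ y : X, r = g y + t * ℓ (dist x y / t)} := by
  intro x t ht
  set B : Set ℝ := {r | ∃ y : X, r = g y + t * ℓ (dist x y / t)} with hBdef
  have hcont : ContinuousOn ℓ (Ici 0) := ellCont ℓ hℓmono hℓconv
  -- every value of B is attained by a constant-speed geodesic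
  have hBsub : B ⊆ hlSetL g ℓ t x := by
    rintro r ⟨y, rfl⟩
    obtain ⟨γ, hγ0, hγ1, hγd⟩ := hgeo y x
    set c := dist y x / t with hc
    have hc0 : 0 ≤ c := div_nonneg dist_nonneg ht.le
    have hdist : ∀ s₁ s₂ : ℝ, 0 ≤ s₁ → s₁ ≤ s₂ → s₂ ≤ t →
        dist (γ (s₁ / t)) (γ (s₂ / t)) = c * (s₂ - s₁) := by
      intro s₁ s₂ h1 h12 h2
      have hm1 : s₁ / t ∈ Icc (0:ℝ) 1 :=
        ⟨div_nonneg h1 ht.le, (div_le_one ht).2 (le_trans h12 h2)⟩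
      have hm2 : s₂ / t ∈ Icc (0:ℝ) 1 :=
        ⟨div_nonneg (le_trans h1 h12) ht.le, (div_le_one ht).2 h2⟩
      rw [hγd _ hm1 _ hm2, div_sub_div_same,
        abs_of_nonneg (div_nonneg (by linarith) ht.le), hc]
      ring
    refine ⟨fun s => γ (s / t), fun _ => c, ⟨fun _ => hc0, ?_, ?_, ?_⟩, ?_, ?_, ?_⟩
    · exact integrableOn_const (by rw [Real.volume_Icc]; exact ENNReal.ofReal_ne_top)
    · intro s₁ s₂ h1 h12 h2
      rw [hdist s₁ s₂ h1 h12 h2, intervalIntegral.integral_const, smul_eq_mul]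
      exact le_of_eq (by ring)
    · intro h h0 hintg hbd
      apply aeConstLe t c ht h hintg
      intro s₁ s₂ h1 h12 h2
      calc c * (s₂ - s₁) = dist (γ (s₁ / t)) (γ (s₂ / t)) := (hdist s₁ s₂ h1 h12 h2).symm
        _ ≤ _ := hbd s₁ s₂ h1 h12 h2
    · exact integrableOn_const (by rw [Real.volume_Icc]; exact ENNReal.ofReal_ne_top)
    · show γ (t / t) = x
      rw [div_self ht.ne']; exact hγ1
    · show g y + t * ℓ (dist x y / t) = g (γ (0 / t)) + ∫ _ in (0:ℝ)..t, ℓ c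
      rw [zero_div, hγ0, intervalIntegral.integral_const, smul_eq_mul, sub_zero, hc,
        dist_comm x y]
  -- every action value dominates a value of B
  have hAB : ∀ r ∈ hlSetL g ℓ t x, ∃ b ∈ B, b ≤ r := by
    rintro r ⟨σ, m, ⟨hm0, hmi, hmbd, _⟩, hℓi, hσt, rfl⟩
    refine ⟨g (σ 0) + t * ℓ (dist x (σ 0) / t), ⟨σ 0, rfl⟩, ?_⟩
    have hd : dist x (σ 0) ≤ ∫ s in Icc (0:ℝ) t, m s := by
      calc dist x (σ 0) = dist (σ 0) (σ t) := by rw [hσt, dist_comm]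
        _ ≤ ∫ u in (0:ℝ)..t, m u := hmbd 0 t le_rfl ht.le le_rfl
        _ = ∫ s in Icc (0:ℝ) t, m s := by
            rw [intervalIntegral.integral_of_le ht.le, integral_Icc_eq_integral_Ioc]
    set I := ∫ s in Icc (0:ℝ) t, m s with hI
    have hI0 : 0 ≤ I := setIntegral_nonneg measurableSet_Icc (fun s _ => hm0 s)
    have hmono2 : ℓ (dist x (σ 0) / t) ≤ ℓ (I / t) := by
      refine hℓmono (mem_Ici.2 (div_nonneg dist_nonneg ht.le))
        (mem_Ici.2 (div_nonneg hI0 ht.le)) ?_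
      gcongr
    have hjen := jensenLe t ht ℓ hcont hℓconv m hm0 hmi hℓi
    have hie : ∫ s in (0:ℝ)..t, ℓ (m s) = ∫ s in Icc (0:ℝ) t, ℓ (m s) := by
      rw [intervalIntegral.integral_of_le ht.le, integral_Icc_eq_integral_Ioc]
    have h2 : t * ℓ (dist x (σ 0) / t) ≤ t * ℓ (I / t) :=
      mul_le_mul_of_nonneg_left hmono2 ht.le
    rw [hie]
    linarith
  have hBne : B.Nonempty := ⟨_, ⟨x, rfl⟩⟩
  have hAne : (hlSetL g ℓ t x).Nonempty := by
    obtain ⟨b, hb⟩ := hBne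
    exact ⟨b, hBsub hb⟩
  by_cases hbdd : BddBelow B
  · have hlbA : ∀ r ∈ hlSetL g ℓ t x, sInf B ≤ r := by
      intro r hr
      obtain ⟨b, hbB, hbr⟩ := hAB r hr
      exact le_trans (csInf_le hbdd hbB) hbr
    have hbddA : BddBelow (hlSetL g ℓ t x) := ⟨sInf B, fun r hr => hlbA r hr⟩
    exact le_antisymm (csInf_le_csInf hbddA hBne hBsub) (le_csInf hAne hlbA)
  · have hbddA : ¬ BddBelow (hlSetL g ℓ t x) := fun hA => hbdd (BddBelow.mono hBsub hA)
    rw [Real.sInf_of_not_bddBelow hbddA, Real.sInf_of_not_bddBelow hbdd]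
end
end

section
/- Let p, q ∈ (1,∞) with 1/p + 1/q = 1, and let a : [0,T_p) → ℝ be the solution of a'(t) + (p−1)|a(t)|^q + 1 = 0 with a(0) = 0, where T_p = (π/q)/((p−1)^{1/q} sin(π/q)). Then a is negative on (0, T_p), is smooth on (0, T_p), and a(t) → −∞ as t ↑ T_p. -/
noncomputable section
open Set Filter Real MeasureTheory intervalIntegral Topology

private lemma hasSum_intervalIntegral_aux {h : ℝ → ℝ} {c : ℕ → ℝ} {y₀ ρ C r : ℝ}
    (hρ : 0 < ρ) (hr : ρ < r) (hC : ∀ n, |c n| * r ^ n ≤ C)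
    (hsum : ∀ u : ℝ, |u - y₀| < ρ → HasSum (fun n => (u - y₀) ^ n • c n) (h u))
    {α β : ℝ} (hαβ : α ≤ β) (hα : |α - y₀| < ρ) (hβ : |β - y₀| < ρ) :
    HasSum (fun n => ∫ u in α..β, (u - y₀) ^ n • c n) (∫ u in α..β, h u) := by
  have hr0 : 0 < r := hρ.trans hr
  have hmem : ∀ u ∈ Ioc α β, |u - y₀| < ρ := by
    intro u hu
    rw [abs_lt] at hα hβ ⊢
    constructor <;> nlinarith [hu.1, hu.2]
  have key : HasSum (fun n => ∫ u in Ioc α β, (u - y₀) ^ n • c n)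
      (∫ u in Ioc α β, h u) := by
    apply MeasureTheory.hasSum_integral_of_dominated_convergence
      (bound := fun n _ => C * (ρ / r) ^ n)
    · intro n
      exact (Continuous.aestronglyMeasurable (by continuity))
    · intro n
      rw [ae_restrict_iff' measurableSet_Ioc]
      filter_upwards with u hu
      have h1 : |u - y₀| ≤ ρ := (hmem u hu).le
      have h2 : ‖(u - y₀) ^ n • c n‖ = |u - y₀| ^ n * |c n| := by
        rw [norm_smul, norm_pow]; rfl
      rw [h2]
      calc |u - y₀| ^ n * |c n| ≤ ρ ^ n * |c n| :=
            mul_le_mul_of_nonneg_right (pow_le_pow_left₀ (abs_nonneg _) h1 n) (abs_nonneg _)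
        _ = (ρ / r) ^ n * (|c n| * r ^ n) := by
            rw [div_pow]; field_simp
        _ ≤ (ρ / r) ^ n * C := mul_le_mul_of_nonneg_left (hC n) (by positivity)
        _ = C * (ρ / r) ^ n := mul_comm _ _
    · filter_upwards with u
      exact (summable_geometric_of_lt_one (by positivity) (by
        rw [div_lt_one hr0]; exact hr)).mul_left C
    · exact integrableOn_const measure_Ioc_lt_top.ne
    · rw [ae_restrict_iff' measurableSet_Ioc]
      filter_upwards with u hu
      exact hsum u (hmem u hu)
  have e1 : ∀ n : ℕ, ∫ u in α..β, (u - y₀) ^ n • c n = ∫ u in Ioc α β, (u - y₀) ^ n • c n :=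
    fun n => intervalIntegral.integral_of_le hαβ
  have e2 : ∫ u in α..β, h u = ∫ u in Ioc α β, h u := intervalIntegral.integral_of_le hαβ
  rw [e2]; simpa only [e1] using key

theorem analyticAt_of_hasDerivAt_of_analyticAt {h g : ℝ → ℝ} {y₀ : ℝ} (hh : AnalyticAt ℝ h y₀)
    (hg : ∀ᶠ y in 𝓝 y₀, HasDerivAt g (h y) y) : AnalyticAt ℝ g y₀ := by
  obtain ⟨p, R, hpR⟩ := hh
  obtain ⟨ρ', hρ'0, hρ'R⟩ := ENNReal.lt_iff_exists_nnreal_btwn.mp hpR.r_pos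
  obtain ⟨ε, hε0, hε⟩ := Metric.eventually_nhds_iff.mp hg
  set r : ℝ := (ρ' : ℝ) with hrdef
  have hr0 : 0 < r := by exact_mod_cast hρ'0
  set ρ : ℝ := min (r / 2) (ε / 2) with hρdef
  have hρ0 : 0 < ρ := lt_min (by linarith) (by linarith)
  have hρr : ρ < r := lt_of_le_of_lt (min_le_left _ _) (by linarith)
  have hρε : ρ < ε := lt_of_le_of_lt (min_le_right _ _) (by linarith)
  obtain ⟨C, hC0, hC⟩ := p.norm_mul_pow_le_of_lt_radius (lt_of_lt_of_le hρ'R hpR.r_le)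
  have hCc : ∀ n, |p.coeff n| * r ^ n ≤ C := by
    intro n
    rw [← Real.norm_eq_abs, ← FormalMultilinearSeries.norm_apply_eq_norm_coef, hrdef]
    exact hC n
  have hball : ∀ u : ℝ, |u - y₀| < ρ → u ∈ Metric.eball y₀ R := by
    intro u hu
    rw [EMetric.mem_ball, edist_dist, Real.dist_eq]
    have h1 : ENNReal.ofReal |u - y₀| < ENNReal.ofReal r :=
      (ENNReal.ofReal_lt_ofReal_iff hr0).mpr (hu.trans hρr)
    rw [hrdef, ENNReal.ofReal_coe_nnreal] at h1
    exact h1.trans hρ'R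
  have hsum : ∀ u : ℝ, |u - y₀| < ρ → HasSum (fun n => (u - y₀) ^ n • p.coeff n) (h u) := by
    intro u hu
    have h2 := hpR.hasSum_sub (hball u hu)
    simpa only [FormalMultilinearSeries.apply_eq_pow_smul_coeff] using h2
  have hcont : ContinuousOn h (Metric.eball y₀ R) := hpR.continuousOn
  set d : ℕ → ℝ := fun m => Nat.rec (g y₀) (fun n _ => p.coeff n / (n + 1)) m with hddef
  have hqc : ∀ m, (FormalMultilinearSeries.ofScalars ℝ d).coeff m = d m := by
    intro m
    show (FormalMultilinearSeries.ofScalars ℝ d) m (fun _ => (1 : ℝ)) = d m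
    rw [FormalMultilinearSeries.ofScalars_apply_eq]
    simp
  refine ⟨FormalMultilinearSeries.ofScalars ℝ d, hasFPowerSeriesAt_iff'.mpr ?_⟩
  rw [Metric.eventually_nhds_iff]
  refine ⟨ρ, hρ0, ?_⟩
  intro z hz
  rw [Real.dist_eq] at hz
  have huz : ∀ u ∈ uIcc y₀ z, |u - y₀| < ρ := by
    intro u hu
    rw [Set.mem_uIcc] at hu
    rw [abs_lt] at hz ⊢
    rcases hu with ⟨h1, h2⟩ | ⟨h1, h2⟩ <;> constructor <;> nlinarith
  have key : HasSum (fun n => ∫ u in y₀..z, (u - y₀) ^ n • p.coeff n) (∫ u in y₀..z, h u) := by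
    rcases le_total y₀ z with hle | hle
    · exact hasSum_intervalIntegral_aux hρ0 hρr hCc hsum hle (by simpa using hρ0) hz
    · have h2 := (hasSum_intervalIntegral_aux hρ0 hρr hCc hsum hle hz (by simpa using hρ0)).neg
      rw [← intervalIntegral.integral_symm] at h2
      convert h2 using 2 with n
      · rfl
      rw [← intervalIntegral.integral_symm]
  have hterm : ∀ n : ℕ, (∫ u in y₀..z, (u - y₀) ^ n • p.coeff n)
      = ((z - y₀) ^ (n + 1) / (n + 1)) • p.coeff n := by
    intro n
    rw [intervalIntegral.integral_smul_const]
    congr 1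
    rw [intervalIntegral.integral_comp_sub_right (fun x => x ^ n) y₀, sub_self, integral_pow,
      zero_pow (Nat.succ_ne_zero n)]
    ring
  have hint : (∫ u in y₀..z, h u) = g z - g y₀ := by
    apply intervalIntegral.integral_eq_sub_of_hasDerivAt
    · intro u hu
      apply hε
      rw [Real.dist_eq]
      exact (huz u hu).trans hρε
    · exact (hcont.mono (fun u hu => hball u (huz u hu))).intervalIntegrable
  rw [hint] at key
  simp only [hterm] at key
  have key3 : HasSum (fun n => (z - y₀) ^ (n + 1) • d (n + 1)) (g z - g y₀) := by
    have heq : (fun n : ℕ => (z - y₀) ^ (n + 1) • d (n + 1))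
        = fun n : ℕ => ((z - y₀) ^ (n + 1) / (n + 1)) • p.coeff n := by
      funext n
      have : d (n + 1) = p.coeff n / (n + 1) := rfl
      rw [this, smul_eq_mul, smul_eq_mul]
      ring
    rw [heq]
    exact key
  have key4 := (hasSum_nat_add_iff (f := fun m => (z - y₀) ^ m • d m) 1).mp key3
  have hd0 : d 0 = g y₀ := rfl
  simp only [hqc]
  simpa [hd0, sub_add_cancel] using key4

lemma beta_aux {s : ℝ} (h0 : 0 < s) (h1 : s < 1) :
    IntegrableOn (fun x : ℝ => x ^ (s - 1) * (1 - x) ^ (-s)) (Ioo 0 1) ∧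
    ∫ x in Ioo 0 1, x ^ (s - 1) * (1 - x) ^ (-s) = π / Real.sin (π * s) := by
  have hu : (0:ℝ) < (s:ℂ).re := by simpa using h0
  have hv : (0:ℝ) < ((1:ℂ) - s).re := by simp [Complex.sub_re]; linarith
  have hEq : ∀ x ∈ Icc (0:ℝ) 1,
      (x:ℂ) ^ ((s:ℂ) - 1) * ((1:ℂ) - x) ^ (((1:ℂ) - s) - 1)
        = ((x ^ (s - 1) * (1 - x) ^ (-s) : ℝ) : ℂ) := by
    intro x hx
    have h2 : ((x ^ (s-1) : ℝ) : ℂ) = (x:ℂ) ^ ((s:ℂ) - 1) := by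
      rw [Complex.ofReal_cpow hx.1 (s-1)]; norm_cast
    have h3 : (((1 - x) ^ (-s) : ℝ) : ℂ) = ((1:ℂ) - x) ^ (((1:ℂ) - s) - 1) := by
      rw [Complex.ofReal_cpow (by linarith [hx.2] : (0:ℝ) ≤ 1 - x) (-s)]
      rw [show (((1:ℂ) - s) - 1) = ((-s : ℝ) : ℂ) by push_cast; ring]
      push_cast
      rfl
    rw [Complex.ofReal_mul, h2, h3]
  have hsin_ne : Complex.sin (↑π * s) ≠ 0 := by
    have : Real.sin (π * s) ≠ 0 := by
      have := Real.sin_pos_of_pos_of_lt_pi (x := π * s) (by positivity)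
        (by nlinarith [Real.pi_pos])
      linarith
    rw [show ((π : ℂ) * s) = ((π * s : ℝ) : ℂ) by push_cast; ring, ← Complex.ofReal_sin]
    exact_mod_cast this
  have hbeta : Complex.betaIntegral s (1 - s) = ↑π / Complex.sin (↑π * s) := by
    have h4 := Complex.Gamma_mul_Gamma_eq_betaIntegral hu hv
    rw [show (s:ℂ) + (1 - s) = 1 by ring, Complex.Gamma_one, one_mul] at h4
    rw [← h4, Complex.Gamma_mul_Gamma_one_sub]
  have hIcc : ∀ x ∈ uIcc (0:ℝ) 1, x ∈ Icc (0:ℝ) 1 := by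
    intro x hx; rwa [uIcc_of_le (by norm_num : (0:ℝ) ≤ 1)] at hx
  have hcongr : Complex.betaIntegral s (1 - s)
      = ∫ x in (0:ℝ)..1, ((x ^ (s - 1) * (1 - x) ^ (-s) : ℝ) : ℂ) := by
    rw [Complex.betaIntegral]
    exact intervalIntegral.integral_congr (fun x hx => hEq x (hIcc x hx))
  rw [intervalIntegral.integral_ofReal] at hcongr
  have hreal : (∫ x in (0:ℝ)..1, x ^ (s - 1) * (1 - x) ^ (-s)) = π / Real.sin (π * s) := by
    have h5 : (((∫ x in (0:ℝ)..1, x ^ (s - 1) * (1 - x) ^ (-s)) : ℝ) : ℂ)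
        = ((π / Real.sin (π * s) : ℝ) : ℂ) := by
      rw [← hcongr, hbeta]
      push_cast [Complex.ofReal_sin]
      ring
    exact_mod_cast h5
  have hioo : (∫ x in Ioo (0:ℝ) 1, x ^ (s - 1) * (1 - x) ^ (-s))
      = ∫ x in (0:ℝ)..1, x ^ (s - 1) * (1 - x) ^ (-s) := by
    rw [intervalIntegral.integral_of_le (by norm_num : (0:ℝ) ≤ 1),
      MeasureTheory.integral_Ioc_eq_integral_Ioo]
  refine ⟨?_, by rw [hioo, hreal]⟩
  -- integrability
  have hci := Complex.betaIntegral_convergent hu hv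
  have hIoc : IntegrableOn (fun x : ℝ => (x:ℂ) ^ ((s:ℂ) - 1) * ((1:ℂ) - x) ^ (((1:ℂ) - s) - 1))
      (Ioc 0 1) volume := by
    rw [← intervalIntegrable_iff_integrableOn_Ioc_of_le (by norm_num : (0:ℝ) ≤ 1)]
    exact hci
  have hre : IntegrableOn (fun x : ℝ =>
      ((x:ℂ) ^ ((s:ℂ) - 1) * ((1:ℂ) - x) ^ (((1:ℂ) - s) - 1)).re) (Ioc 0 1) volume := hIoc.re
  refine (hre.mono_set Ioo_subset_Ioc_self).congr_fun ?_ measurableSet_Ioo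
  intro x hx
  have h6 := hEq x ⟨hx.1.le, hx.2.le⟩
  simp only [h6, Complex.ofReal_re]

lemma mellin_aux {s : ℝ} (h0 : 0 < s) (h1 : s < 1) :
    IntegrableOn (fun t : ℝ => t ^ (s - 1) * (1 + t)⁻¹) (Ioi 0) ∧
    ∫ t in Ioi 0, t ^ (s - 1) * (1 + t)⁻¹ = π / Real.sin (π * s) := by
  set ψ : ℝ → ℝ := fun x => x / (1 - x) with hψdef
  set ψ' : ℝ → ℝ := fun x => ((1 - x) ^ 2)⁻¹ with hψ'def
  have hderiv : ∀ x ∈ Ioo (0:ℝ) 1, HasDerivWithinAt ψ (ψ' x) (Ioo 0 1) x := by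
    intro x hx
    have hne : (1 : ℝ) - x ≠ 0 := by have := hx.2; intro hc; linarith [hc]
    have h2 : HasDerivAt (fun y : ℝ => (1 - y)) (-1) x := by
      simpa using ((hasDerivAt_id x).const_sub 1)
    have h3 : HasDerivAt ψ (1 * (1 - x)⁻¹ + x * (-(-1) / (1 - x) ^ 2)) x := by
      have h5 := (hasDerivAt_id x).mul (h2.inv hne)
      exact h5.congr_of_eventuallyEq (Filter.Eventually.of_forall fun y => by simp [hψdef, div_eq_mul_inv])
    have h4 : (1 * (1 - x)⁻¹ + x * (-(-1) / (1 - x) ^ 2)) = ψ' x := by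
      rw [hψ'def]
      field_simp
      ring
    rw [h4] at h3
    exact h3.hasDerivWithinAt
  have hinj : InjOn ψ (Ioo 0 1) := by
    intro a ha b hb hab
    have hna : (0:ℝ) < 1 - a := by linarith [ha.2]
    have hnb : (0:ℝ) < 1 - b := by linarith [hb.2]
    rw [hψdef, div_eq_div_iff hna.ne' hnb.ne'] at hab
    nlinarith [hab]
  have himg : ψ '' Ioo 0 1 = Ioi 0 := by
    apply Subset.antisymm
    · rintro t ⟨x, hx, rfl⟩
      exact div_pos hx.1 (by linarith [hx.2])
    · intro t ht
      have ht0 : (0:ℝ) < t := ht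
      refine ⟨t / (1 + t), ⟨div_pos ht0 (by linarith), ?_⟩, ?_⟩
      · rw [div_lt_one (by linarith)]; linarith
      · rw [hψdef]
        field_simp
        ring
  have hEqOn : EqOn (fun x => |ψ' x| • ((ψ x) ^ (s - 1) * (1 + ψ x)⁻¹))
      (fun x => x ^ (s - 1) * (1 - x) ^ (-s)) (Ioo 0 1) := by
    intro x hx
    have hA : (0:ℝ) < 1 - x := by linarith [hx.2]
    have hApow : (0:ℝ) < (1 - x) ^ (s - 1) := Real.rpow_pos_of_pos hA _
    have e1 : 1 + ψ x = (1 - x)⁻¹ := by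
      rw [hψdef]
      field_simp
      ring
    have e2 : (1 - x) ^ (-(s-1)) * (1 - x) ^ (-1 : ℝ) = (1 - x) ^ (-s) := by
      rw [← Real.rpow_add hA]; ring_nf
    rw [Real.rpow_neg hA.le (s-1), Real.rpow_neg_one] at e2
    have e3 : |ψ' x| = ((1 - x) ^ 2)⁻¹ := by
      rw [hψ'def, abs_of_pos (by positivity)]
    simp only []
    rw [e1, e3, inv_inv, hψdef, Real.div_rpow hx.1.le hA.le, smul_eq_mul, ← e2]
    field_simp
  obtain ⟨hbi, hbv⟩ := beta_aux h0 h1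
  constructor
  · rw [← himg,
      integrableOn_image_iff_integrableOn_abs_deriv_smul measurableSet_Ioo hderiv hinj]
    exact hbi.congr_fun (fun x hx => (hEqOn hx).symm) measurableSet_Ioo
  · have hCV := integral_image_eq_integral_abs_deriv_smul measurableSet_Ioo hderiv hinj
      (fun t => t ^ (s - 1) * (1 + t)⁻¹)
    rw [himg] at hCV
    rw [hCV, setIntegral_congr_fun measurableSet_Ioo hEqOn, hbv]

lemma analyticAt_rlog {x : ℝ} (hx : 0 < x) : AnalyticAt ℝ Real.log x := by
  apply analyticAt_of_hasDerivAt_of_analyticAt (analyticAt_inv (ne_of_gt hx))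
  filter_upwards [isOpen_Ioi.eventually_mem hx] with y hy
  exact Real.hasDerivAt_log (ne_of_gt hy)

lemma analyticAt_rpow_const {x e : ℝ} (hx : 0 < x) : AnalyticAt ℝ (fun y : ℝ => y ^ e) x := by
  have h1 : AnalyticAt ℝ (fun y : ℝ => rexp (Real.log y * e)) x :=
    analyticAt_rexp.comp ((analyticAt_rlog hx).mul analyticAt_const)
  apply h1.congr
  filter_upwards [isOpen_Ioi.eventually_mem hx] with y hy
  exact (Real.rpow_def_of_pos hy e).symm

/-- Example 3.4: let `a` solve `a' + (p-1)|a|^q + 1 = 0`, `a(0) = 0`, on `[0, T_p)` with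
`T_p = (π/q)/((p-1)^{1/q} sin(π/q))`. Then `a` is negative on `(0,T_p)`, smooth on
`(0,T_p)`, and `a(t) → -∞` as `t ↑ T_p`. -/
theorem ode_solution_properties (p q : ℝ) (hp : 1 < p) (hq : 1 / p + 1 / q = 1)
    (Tp : ℝ) (hTp : Tp = (π / q) / ((p - 1) ^ (1 / q) * Real.sin (π / q)))
    (a : ℝ → ℝ) (ha0 : a 0 = 0)
    (hode : ∀ t ∈ Ico (0:ℝ) Tp, HasDerivAt a (-((p - 1) * |a t| ^ q + 1)) t) :
    (∀ t ∈ Ioo (0:ℝ) Tp, a t < 0) ∧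
    ContDiffOn ℝ (⊤ : ℕ∞) a (Ioo 0 Tp) ∧
    Tendsto a (nhdsWithin Tp (Iio Tp)) atBot := by
  -- basic numerical facts
  have hp0 : (0:ℝ) < p := lt_trans one_pos hp
  have hk : (0:ℝ) < p - 1 := by linarith
  have hinvp1 : 1 / p < 1 := by rw [div_lt_one hp0]; exact hp
  have hinvp0 : 0 < 1 / p := by positivity
  have hs0 : 0 < 1 / q := by linarith
  have hq0 : (0:ℝ) < q := one_div_pos.mp hs0
  have hs1 : 1 / q < 1 := by linarith
  have hq1 : 1 < q := (div_lt_one hq0).mp hs1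
  have hπq0 : 0 < π / q := div_pos Real.pi_pos hq0
  have hπqπ : π / q < π := div_lt_self Real.pi_pos hq1
  have hsin : 0 < Real.sin (π / q) := Real.sin_pos_of_pos_of_lt_pi hπq0 hπqπ
  have hTp0 : 0 < Tp := by
    rw [hTp]
    exact div_pos hπq0 (mul_pos (Real.rpow_pos_of_pos hk _) hsin)
  -- the function f and its primitive g
  set f : ℝ → ℝ := fun z => ((p - 1) * z ^ q + 1)⁻¹ with hfdef
  have hbase : ∀ z : ℝ, 0 ≤ z → (0:ℝ) < (p - 1) * z ^ q + 1 := by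
    intro z hz
    have := mul_nonneg hk.le (Real.rpow_nonneg hz q)
    linarith
  have hfpos : ∀ z : ℝ, 0 ≤ z → 0 < f z := fun z hz => inv_pos.mpr (hbase z hz)
  have hfle : ∀ z : ℝ, 0 ≤ z → f z ≤ 1 := by
    intro z hz
    rw [hfdef]
    have h1 : (1:ℝ) ≤ (p - 1) * z ^ q + 1 := by
      have := mul_nonneg hk.le (Real.rpow_nonneg hz q); linarith
    have h2 := inv_anti₀ one_pos h1
    simpa using h2
  have hrpc : Continuous fun z : ℝ => z ^ q :=
    continuous_iff_continuousAt.mpr fun x => Real.continuousAt_rpow_const x q (Or.inr hq0.le)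
  have hbcont : Continuous fun z : ℝ => (p - 1) * z ^ q + 1 :=
    (continuous_const.mul hrpc).add continuous_const
  have hfca : ∀ z : ℝ, 0 ≤ z → ContinuousAt f z := fun z hz =>
    hbcont.continuousAt.inv₀ (hbase z hz).ne'
  have hfc : ContinuousOn f (Ici 0) := fun z hz => (hfca z hz).continuousWithinAt
  have hfan : ∀ y : ℝ, 0 < y → AnalyticAt ℝ f y := by
    intro y hy
    exact ((analyticAt_const.mul (analyticAt_rpow_const hy)).add analyticAt_const).inv
      (hbase y hy.le).ne'
  have hgI : ∀ {α β : ℝ}, 0 ≤ α → 0 ≤ β → IntervalIntegrable f volume α β := by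
    intro α β hα hβ
    refine (hfc.mono fun x hx => ?_).intervalIntegrable
    exact le_trans (le_inf hα hβ) hx.1
  set g : ℝ → ℝ := fun y => ∫ u in (0:ℝ)..y, f u with hgdef
  have hsmf := ContinuousOn.stronglyMeasurableAtFilter (μ := volume) isOpen_Ioi
    (hfc.mono Ioi_subset_Ici_self)
  have hgd : ∀ y : ℝ, 0 < y → HasDerivAt g (f y) y := fun y hy =>
    intervalIntegral.integral_hasDerivAt_right (hgI le_rfl hy.le) (hsmf y hy) (hfca y hy.le)
  have hgadd : ∀ y₁ y₂ : ℝ, 0 ≤ y₁ → 0 ≤ y₂ → g y₂ - g y₁ = ∫ u in y₁..y₂, f u := by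
    intro y₁ y₂ h1 h2
    have h3 := intervalIntegral.integral_add_adjacent_intervals (hgI le_rfl h1) (hgI h1 h2)
    rw [hgdef]
    simp only []
    linarith [h3]
  have hgmono : ∀ y₁ y₂ : ℝ, 0 ≤ y₁ → y₁ ≤ y₂ → g y₁ ≤ g y₂ := by
    intro y₁ y₂ h1 h2
    have h3 := hgadd y₁ y₂ h1 (h1.trans h2)
    have h4 : 0 ≤ ∫ u in y₁..y₂, f u :=
      intervalIntegral.integral_nonneg h2 fun u hu => (hfpos u (h1.trans hu.1)).le
    linarith
  have hgstrict : ∀ y₁ y₂ : ℝ, 0 ≤ y₁ → y₁ < y₂ → g y₁ < g y₂ := by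
    intro y₁ y₂ h1 h2
    have h3 := hgadd y₁ y₂ h1 (h1.trans h2.le)
    have h4 : 0 < ∫ u in y₁..y₂, f u :=
      intervalIntegral.intervalIntegral_pos_of_pos_on (hgI h1 (h1.trans h2.le))
        (fun u hu => hfpos u (h1.trans hu.1.le)) h2
    linarith
  have hg0 : g 0 = 0 := by rw [hgdef]; simp
  have hgnonneg : ∀ y : ℝ, 0 ≤ y → 0 ≤ g y := by
    intro y hy
    have := hgmono 0 y le_rfl hy
    rw [hg0] at this
    exact this
  have hgley : ∀ y : ℝ, 0 ≤ y → g y ≤ y := by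
    intro y hy
    have h1 : (∫ u in (0:ℝ)..y, f u) ≤ ∫ u in (0:ℝ)..y, (1:ℝ) :=
      intervalIntegral.integral_mono_on hy (hgI le_rfl hy) intervalIntegrable_const
        fun u hu => hfle u hu.1
    rw [hgdef]
    simpa using h1
  -- Part 1
  have hanti : StrictAntiOn a (Ico 0 Tp) := by
    apply strictAntiOn_of_deriv_neg (convex_Ico 0 Tp)
      (fun t ht => (hode t ht).continuousAt.continuousWithinAt)
    intro t ht
    rw [interior_Ico] at ht
    rw [(hode t ⟨ht.1.le, ht.2⟩).deriv]
    have := mul_nonneg hk.le (Real.rpow_nonneg (abs_nonneg (a t)) q)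
    linarith
  have part1 : ∀ t ∈ Ioo (0:ℝ) Tp, a t < 0 := by
    intro t ht
    have := hanti ⟨le_rfl, hTp0⟩ ⟨ht.1.le, ht.2⟩ ht.1
    rwa [ha0] at this
  -- key identity
  have hkey : ∀ t ∈ Ioo (0:ℝ) Tp, g (-a t) = t := by
    intro t₀ ht₀
    set w : ℝ → ℝ := fun t => g (-a t) - t with hwdef
    have hw' : ∀ x ∈ Ioo (0:ℝ) Tp, HasDerivAt w 0 x := by
      intro x hx
      have hax : a x < 0 := part1 x hx
      have hy : 0 < -a x := by linarith
      have hna : HasDerivAt (fun t => -a t) ((p - 1) * |a x| ^ q + 1) x := by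
        have h5 := (hode x ⟨hx.1.le, hx.2⟩).neg
        rw [neg_neg] at h5
        exact h5
      have hcomp : HasDerivAt (fun t => g (-a t)) (f (-a x) * ((p - 1) * |a x| ^ q + 1)) x :=
        by have := HasDerivAt.comp x (hgd (-a x) hy) hna; exact this
      have hval : f (-a x) * ((p - 1) * |a x| ^ q + 1) = 1 := by
        rw [hfdef, abs_of_neg hax]
        exact inv_mul_cancel₀ (hbase (-a x) hy.le).ne'
      have h6 := hcomp.sub (hasDerivAt_id x)
      rw [hwdef]
      convert h6 using 1
      · rfl
      · rfl
      · rfl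
      rw [hval]
      ring
    have hconst : ∀ ε ∈ Ioo (0:ℝ) t₀, w t₀ = w ε := by
      intro ε hε
      have h6 := constant_of_has_deriv_right_zero (f := w) (a := ε) (b := t₀)
        (fun x hx => (hw' x ⟨lt_of_lt_of_le hε.1 hx.1, lt_of_le_of_lt hx.2 ht₀.2⟩).continuousAt.continuousWithinAt)
        (fun x hx => (hw' x ⟨lt_of_lt_of_le hε.1 hx.1, lt_trans hx.2 ht₀.2⟩).hasDerivWithinAt)
      exact h6 t₀ ⟨hε.2.le, le_rfl⟩
    have hca : ContinuousAt a 0 := (hode 0 ⟨le_rfl, hTp0⟩).continuousAt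
    have hta : Tendsto (fun ε => -a ε) (𝓝[>] (0:ℝ)) (𝓝 0) := by
      have h7 : Tendsto (fun ε => -a ε) (𝓝 (0:ℝ)) (𝓝 (-a 0)) := hca.neg.tendsto
      rw [ha0, neg_zero] at h7
      exact h7.mono_left nhdsWithin_le_nhds
    have hmemIoo : Ioo (0:ℝ) t₀ ∈ 𝓝[>] (0:ℝ) :=
      Ioo_mem_nhdsGT_of_mem ⟨le_rfl, ht₀.1⟩
    have hbound : ∀ᶠ ε in 𝓝[>] (0:ℝ), 0 ≤ g (-a ε) ∧ g (-a ε) ≤ -a ε := by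
      filter_upwards [hmemIoo] with ε hε
      have h8 : 0 < -a ε := by
        have := part1 ε ⟨hε.1, hε.2.trans ht₀.2⟩; linarith
      exact ⟨hgnonneg _ h8.le, hgley _ h8.le⟩
    have hg0lim : Tendsto (fun ε => g (-a ε)) (𝓝[>] (0:ℝ)) (𝓝 0) :=
      squeeze_zero' (hbound.mono fun ε h => h.1) (hbound.mono fun ε h => h.2) hta
    have hwlim : Tendsto w (𝓝[>] (0:ℝ)) (𝓝 0) := by
      have h7 : Tendsto (fun ε : ℝ => ε) (𝓝[>] (0:ℝ)) (𝓝 0) :=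
        tendsto_id.mono_left nhdsWithin_le_nhds
      have h9 := hg0lim.sub h7
      rw [sub_zero] at h9
      exact h9
    have hwconst : Tendsto w (𝓝[>] (0:ℝ)) (𝓝 (w t₀)) := by
      have hcc : Tendsto (fun _ : ℝ => w t₀) (𝓝[>] (0:ℝ)) (𝓝 (w t₀)) := tendsto_const_nhds
      apply Filter.Tendsto.congr' ?_ hcc
      filter_upwards [hmemIoo] with ε hε
      exact hconst ε hε
    have h10 : w t₀ = 0 := tendsto_nhds_unique hwconst hwlim
    have h11 : g (-a t₀) - t₀ = 0 := h10
    linarith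
  -- the improper integral equals Tp
  have hIv : IntegrableOn f (Ioi 0) volume ∧ ∫ z in Ioi 0, f z = Tp := by
    obtain ⟨hmi, hmv⟩ := mellin_aux hs0 hs1
    set c : ℝ := 1 / q * ((p - 1) ^ (1 / q))⁻¹ with hcdef
    set φ : ℝ → ℝ := fun t => (t / (p - 1)) ^ (1 / q) with hφdef
    set φ' : ℝ → ℝ := fun t => 1 / q * (t / (p - 1)) ^ (1 / q - 1) * (1 / (p - 1)) with hφ'def
    have hdφ : ∀ t ∈ Ioi (0:ℝ), HasDerivWithinAt φ (φ' t) (Ioi 0) t := by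
      intro t ht
      have htk : 0 < t / (p - 1) := div_pos ht hk
      have h8 : HasDerivAt (fun x : ℝ => x ^ (1 / q))
          (1 / q * (t / (p - 1)) ^ (1 / q - 1)) (t / (p - 1)) :=
        Real.hasDerivAt_rpow_const (Or.inl htk.ne')
      have h9 : HasDerivAt (fun u : ℝ => u / (p - 1)) (1 / (p - 1)) t := by
        simpa using (hasDerivAt_id t).div_const (p - 1)
      exact (HasDerivAt.comp t h8 h9).hasDerivWithinAt
    have hinjφ : InjOn φ (Ioi 0) := by
      intro u hu v hv huv
      have h10 := Real.rpow_left_injOn (x := 1 / q) hs0.ne'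
      have h11 : u / (p - 1) = v / (p - 1) :=
        h10 (mem_setOf.mpr (div_pos hu hk).le) (mem_setOf.mpr (div_pos hv hk).le) huv
      field_simp at h11
      exact h11
    have himgφ : φ '' Ioi 0 = Ioi 0 := by
      apply Subset.antisymm
      · rintro z ⟨t, ht, rfl⟩
        exact Real.rpow_pos_of_pos (div_pos ht hk) _
      · intro z hz
        have hz0 : (0:ℝ) < z := hz
        refine ⟨(p - 1) * z ^ q, mul_pos hk (Real.rpow_pos_of_pos hz0 q), ?_⟩
        rw [hφdef]
        simp only []
        rw [mul_div_cancel_left₀ _ hk.ne', ← Real.rpow_mul hz0.le,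
          mul_one_div_cancel hq0.ne', Real.rpow_one]
    have hEq2 : EqOn (fun t => |φ' t| • f (φ t))
        (fun t => c * (t ^ (1 / q - 1) * (1 + t)⁻¹)) (Ioi 0) := by
      intro t ht
      have ht0 : (0:ℝ) < t := ht
      have htk : 0 < t / (p - 1) := div_pos ht0 hk
      have hpow : (0:ℝ) < (t / (p - 1)) ^ (1 / q - 1) := Real.rpow_pos_of_pos htk _
      have habs : |φ' t| = 1 / q * (t / (p - 1)) ^ (1 / q - 1) * (1 / (p - 1)) := by
        rw [hφ'def, abs_of_pos (by positivity)]
      have hfφ : f (φ t) = (1 + t)⁻¹ := by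
        rw [hfdef, hφdef]
        simp only []
        rw [← Real.rpow_mul htk.le, one_div_mul_cancel hq0.ne', Real.rpow_one,
          mul_div_cancel₀ _ hk.ne']
        rw [add_comm]
      have hdiv : (t / (p - 1)) ^ (1 / q - 1) = t ^ (1 / q - 1) / (p - 1) ^ (1 / q - 1) :=
        Real.div_rpow ht0.le hk.le _
      have hcc : 1 / q * (t ^ (1 / q - 1) / (p - 1) ^ (1 / q - 1)) * (1 / (p - 1))
          = c * t ^ (1 / q - 1) := by
        have h12 := Real.rpow_add hk (1 / q - 1) 1
        rw [sub_add_cancel, Real.rpow_one] at h12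
        rw [hcdef, h12, mul_inv]
        ring
      simp only [smul_eq_mul]
      rw [habs, hfφ, hdiv, ← mul_assoc]
      rw [hcc]
    constructor
    · rw [← himgφ,
        integrableOn_image_iff_integrableOn_abs_deriv_smul measurableSet_Ioi hdφ hinjφ]
      have h13 : IntegrableOn (fun t : ℝ => c * (t ^ (1 / q - 1) * (1 + t)⁻¹)) (Ioi 0) volume :=
        hmi.const_mul c
      exact h13.congr_fun (fun t ht => (hEq2 ht).symm) measurableSet_Ioi
    · have hCV := integral_image_eq_integral_abs_deriv_smul measurableSet_Ioi hdφ hinjφ f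
      rw [himgφ] at hCV
      rw [hCV, setIntegral_congr_fun measurableSet_Ioi hEq2, MeasureTheory.integral_const_mul, hmv]
      rw [hTp, hcdef]
      rw [show π * (1 / q) = π / q by ring]
      have hne1 : Real.sin (π / q) ≠ 0 := hsin.ne'
      have hne2 : (p - 1) ^ (1 / q) ≠ 0 := (Real.rpow_pos_of_pos hk _).ne'
      field_simp
  -- g y < Tp for all y ≥ 0
  have hgltTp : ∀ y : ℝ, 0 ≤ y → g y < Tp := by
    intro y hy
    have h1 : g y < g (y + 1) := hgstrict y (y + 1) hy (by linarith)
    have h2 : g (y + 1) ≤ Tp := by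
      have h3 : g (y + 1) = ∫ u in Ioc 0 (y + 1), f u := by
        rw [hgdef]
        simp only []
        rw [intervalIntegral.integral_of_le (by linarith)]
      rw [h3, ← hIv.2]
      apply setIntegral_mono_set hIv.1
      · rw [EventuallyLE]
        rw [ae_restrict_iff' measurableSet_Ioi]
        filter_upwards with z hz
        exact (hfpos z (le_of_lt hz)).le
      · exact HasSubset.Subset.eventuallyLE Ioc_subset_Ioi_self
    linarith
  -- Part 3
  have part3 : Tendsto a (𝓝[<] Tp) atBot := by
    rw [tendsto_atBot]
    intro b
    have hM0 : (0:ℝ) ≤ |b| + 1 := by positivity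
    have hgM : g (|b| + 1) < Tp := hgltTp _ hM0
    filter_upwards [Ioo_mem_nhdsLT_of_mem (show Tp ∈ Ioc (g (|b| + 1)) Tp from ⟨hgM, le_rfl⟩)]
      with t ht
    have ht0 : 0 < t := lt_of_le_of_lt (hgnonneg _ hM0) ht.1
    have htT : t ∈ Ioo (0:ℝ) Tp := ⟨ht0, ht.2⟩
    have h2 : g (-a t) = t := hkey t htT
    by_contra hcon
    push_neg at hcon
    have h3 : -a t ≤ |b| + 1 := by
      have := neg_abs_le b
      linarith
    have h4 : g (-a t) ≤ g (|b| + 1) := hgmono _ _ (by linarith [part1 t htT]) h3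
    rw [h2] at h4
    linarith [ht.1]
  -- Part 2 : analyticity
  have hgan : ∀ y : ℝ, 0 < y → AnalyticAt ℝ g y := by
    intro y hy
    apply analyticAt_of_hasDerivAt_of_analyticAt (hfan y hy)
    filter_upwards [isOpen_Ioi.eventually_mem hy] with z hz
    exact hgd z hz
  have hgInj : InjOn g (Ici 0) := by
    have hsm : StrictMonoOn g (Ici 0) := fun y₁ h₁ y₂ _ hlt => hgstrict y₁ y₂ h₁ hlt
    exact hsm.injOn
  have part2 : AnalyticOnNhd ℝ a (Ioo 0 Tp) := by
    intro t₀ ht₀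
    have hat₀ : a t₀ < 0 := part1 t₀ ht₀
    have hy₀ : 0 < -a t₀ := by linarith
    have hgy₀ : g (-a t₀) = t₀ := hkey t₀ ht₀
    have hfy₀ : f (-a t₀) ≠ 0 := (hfpos _ hy₀.le).ne'
    have hstrict : HasStrictDerivAt g (f (-a t₀)) (-a t₀) :=
      ((hgan _ hy₀).contDiffAt (n := 1)).hasStrictDerivAt' (hgd _ hy₀) one_ne_zero
    have hFD := hstrict.hasStrictFDerivAt_equiv hfy₀
    set Φ := hFD.toOpenPartialHomeomorph g with hΦdef
    have hΦcoe : ⇑Φ = g := hFD.toOpenPartialHomeomorph_coe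
    have hsrc : -a t₀ ∈ Φ.source := hFD.mem_toOpenPartialHomeomorph_source
    have htgt : t₀ ∈ Φ.target := by
      rw [← hgy₀, ← hΦcoe]
      exact Φ.map_source hsrc
    have hsymm_t₀ : Φ.symm t₀ = -a t₀ := by
      have h14 := Φ.left_inv hsrc
      rw [hΦcoe] at h14
      rwa [hgy₀] at h14
    have hfderiv : fderiv ℝ g (-a t₀)
        = (ContinuousLinearEquiv.unitsEquivAut ℝ (Units.mk0 (f (-a t₀)) hfy₀) : ℝ →L[ℝ] ℝ) :=
      hFD.hasFDerivAt.fderiv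
    have hsymm_an : AnalyticAt ℝ Φ.symm t₀ := by
      apply Φ.analyticAt_symm htgt
      · rw [hΦcoe, hsymm_t₀]
        exact hgan _ hy₀
      · rw [hΦcoe, hsymm_t₀]
        exact hfderiv
    have hconts : ContinuousAt Φ.symm t₀ := Φ.continuousAt_symm htgt
    have hev1 : ∀ᶠ t in 𝓝 t₀, Φ.symm t ∈ Ioi (0:ℝ) := by
      apply hconts.preimage_mem_nhds
      rw [hsymm_t₀]
      exact isOpen_Ioi.mem_nhds hy₀
    have hev2 : ∀ᶠ t in 𝓝 t₀, t ∈ Φ.target := Φ.open_target.eventually_mem htgt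
    have hev3 : ∀ᶠ t in 𝓝 t₀, t ∈ Ioo (0:ℝ) Tp := isOpen_Ioo.eventually_mem ht₀
    have hfinal : (fun t => -Φ.symm t) =ᶠ[𝓝 t₀] a := by
      filter_upwards [hev1, hev2, hev3] with t h1 h2 h3
      have e1 : g (Φ.symm t) = t := by
        rw [← hΦcoe]
        exact Φ.right_inv h2
      have e2 : g (-a t) = t := hkey t h3
      have e3 : Φ.symm t = -a t := by
        apply hgInj (le_of_lt (mem_Ioi.mp h1)) (by have := part1 t h3; simp; linarith)
        rw [e1, e2]
      rw [e3, neg_neg]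
    exact hsymm_an.neg.congr hfinal
  exact ⟨part1, part2.contDiffOn isOpen_Ioo.uniqueDiffOn, part3⟩
end
end
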